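/- arXiv:1803.08453 — 3 statements merged into one kernel-verified Lean document; each statement's English description precedes it below -/
import Mathlib

section
/- Let E be a sequential effect space whose associated order unit space V is a Hilbert space with inner product ⟨·,·⟩ satisfying ⟨a ∘ b, c⟩ = ⟨b, a ∘ c⟩ for all effects a,b,c. Then ⟨a, b⟩ ≥ 0 for all positive a, b, and the positive cone of V is self-dual: a ≥ 0 if and only if ⟨a,b⟩ ≥ 0 for all b ≥ 0. -/
/-- `x ≤ y` for a partially defined addition: there is `c` with `x + c` defined and `x + c = y`. -/
def pLe {E : Type*} (D : E → E → Prop) (add : E → E → E) (x y : E) : Prop :=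
  ∃ c, D x c ∧ add x c = y

/-- An effect algebra: a partially defined commutative associative addition with zero,
the zero-one law and unique complements. `D a b` means "`a + b` is defined". -/
structure EffectAlgebra (E : Type*) where
  D : E → E → Prop
  add : E → E → E
  zero : E
  one : E
  compl : E → E
  D_comm : ∀ {a b}, D a b → D b a
  add_comm' : ∀ {a b}, D a b → add a b = add b a
  D_assoc_left : ∀ {a b c}, D b c → D a (add b c) → D a b
  D_assoc : ∀ {a b c}, D b c → D a (add b c) → D (add a b) c
  add_assoc' : ∀ {a b c}, D b c → D a (add b c) → add a (add b c) = add (add a b) c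
  D_zero : ∀ a, D a zero
  add_zero' : ∀ a, add a zero = a
  zero_one : ∀ {a}, D a one → a = zero
  D_compl : ∀ a, D a (compl a)
  add_compl : ∀ a, add a (compl a) = one
  compl_unique : ∀ {a b}, D a b → add a b = one → b = compl a

namespace EffectAlgebra
variable {E : Type*} (EA : EffectAlgebra E)
/-- The canonical order of an effect algebra. -/
def le (a b : E) : Prop := pLe EA.D EA.add a b
end EffectAlgebra

/-- A sequential effect algebra (Gudder–Greechie): an effect algebra with a total
binary operation `seq` (the sequential product) satisfying the five axioms. -/
structure SEA (E : Type*) extends EffectAlgebra E where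
  seq : E → E → E
  seq_D : ∀ {b c} (a : E), D b c → D (seq a b) (seq a c)
  seq_add : ∀ {b c} (a : E), D b c → seq a (add b c) = add (seq a b) (seq a c)
  one_seq : ∀ a, seq one a = a
  seq_orth : ∀ {a b}, seq a b = zero → seq b a = zero
  seq_compl : ∀ {a b}, seq a b = seq b a → seq a (compl b) = seq (compl b) a
  seq_assoc : ∀ {a b}, seq a b = seq b a → ∀ c, seq a (seq b c) = seq (seq a b) c
  comm_seq : ∀ {a b c}, seq c a = seq a c → seq c b = seq b c →
    seq c (seq a b) = seq (seq a b) c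
  comm_add : ∀ {a b c}, seq c a = seq a c → seq c b = seq b c → D a b →
    seq c (add a b) = seq (add a b) c

namespace SEA
variable {E : Type*} (SE : SEA E)
/-- The order of the underlying effect algebra. -/
def le (a b : E) : Prop := pLe SE.D SE.add a b
end SEA

/-- A convex sequential effect algebra: a sequential effect algebra together with a
`[0,1]`-action (convex structure). -/
structure ConvexSEA (E : Type*) extends SEA E where
  smul : ℝ → E → E
  smul_D : ∀ {r s : ℝ} (a : E), 0 ≤ r → 0 ≤ s → r + s ≤ 1 → D (smul r a) (smul s a)
  smul_add_dist : ∀ {r s : ℝ} (a : E), 0 ≤ r → 0 ≤ s → r + s ≤ 1 →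
    smul (r + s) a = add (smul r a) (smul s a)
  smul_mul : ∀ {r s : ℝ} (a : E), 0 ≤ r → r ≤ 1 → 0 ≤ s → s ≤ 1 →
    smul (r * s) a = smul r (smul s a)
  zero_smul : ∀ a, smul 0 a = zero
  one_smul : ∀ a, smul 1 a = a
  smul_D_add : ∀ {r : ℝ} {a b : E}, 0 ≤ r → r ≤ 1 → D a b → D (smul r a) (smul r b)
  smul_add : ∀ {r : ℝ} {a b : E}, 0 ≤ r → r ≤ 1 → D a b →
    smul r (add a b) = add (smul r a) (smul r b)

/-- A sequential effect space: a convex σ-sequential effect algebra. Decreasing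
sequences have infima (given by `inf`), which are preserved by the sequential
product, and under which commutation is stable. -/
structure SES (E : Type*) extends ConvexSEA E where
  inf : (ℕ → E) → E
  inf_le : ∀ {f : ℕ → E}, (∀ n, pLe D add (f (n + 1)) (f n)) →
    ∀ n, pLe D add (inf f) (f n)
  le_inf : ∀ {f : ℕ → E}, (∀ n, pLe D add (f (n + 1)) (f n)) →
    ∀ x, (∀ n, pLe D add x (f n)) → pLe D add x (inf f)
  seq_inf : ∀ {f : ℕ → E} (b : E), (∀ n, pLe D add (f (n + 1)) (f n)) →
    seq b (inf f) = inf (fun n => seq b (f n))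
  comm_inf : ∀ {f : ℕ → E} {b : E}, (∀ n, pLe D add (f (n + 1)) (f n)) →
    (∀ n, seq b (f n) = seq (f n) b) → seq b (inf f) = seq (inf f) b

namespace SES
variable {E : Type*} (SE : SES E)
/-- The order of the underlying effect algebra of a sequential effect space. -/
def le (a b : E) : Prop := pLe SE.D SE.add a b
end SES

/-- The order unit space `V` associated to a sequential effect space, together with
the extension of the sequential product to the positive cone of `V`: `V` is an
Archimedean ordered real vector space with order unit `one`, whose unit interval,
with the restricted operations, is a sequential effect space (a convex σ-sequential
effect algebra), and `seq` is linear in its second argument and positively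
homogeneous in its first. -/
structure OrderUnitSES (V : Type*) [AddCommGroup V] [PartialOrder V] [Module ℝ V] where
  one : V
  seq : V → V → V
  add_le_add : ∀ {a b : V} (c : V), a ≤ b → a + c ≤ b + c
  smul_nonneg : ∀ {r : ℝ} {a : V}, 0 ≤ r → 0 ≤ a → 0 ≤ r • a
  orderUnit : ∀ v : V, ∃ n : ℕ, -((n : ℝ) • one) ≤ v ∧ v ≤ (n : ℝ) • one
  archimedean : ∀ v : V, (∀ n : ℕ, v ≤ (1 / ((n : ℝ) + 1)) • one) → v ≤ 0
  seq_add : ∀ a b c : V, seq a (b + c) = seq a b + seq a c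
  seq_smul : ∀ (r : ℝ) (a b : V), seq a (r • b) = r • seq a b
  seq_homog : ∀ {r : ℝ} (a b : V), 0 ≤ r → seq (r • a) b = r • seq a b
  one_seq : ∀ a : V, seq one a = a
  seq_pos : ∀ {a b : V}, 0 ≤ a → 0 ≤ b → 0 ≤ seq a b
  ses : SES {v : V // 0 ≤ v ∧ v ≤ one}
  ses_D : ∀ a b, ses.D a b ↔ a.1 + b.1 ≤ one
  ses_add : ∀ a b, ses.D a b → (ses.add a b).1 = a.1 + b.1
  ses_zero : ses.zero.1 = 0
  ses_one : ses.one.1 = one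
  ses_compl : ∀ a, (ses.compl a).1 = one - a.1
  ses_smul : ∀ (r : ℝ) (a), 0 ≤ r → r ≤ 1 → (ses.smul r a).1 = r • a.1
  ses_seq : ∀ a b, (ses.seq a b).1 = seq a.1 b.1

namespace OrderUnitSES

variable {V : Type*} [AddCommGroup V] [PartialOrder V] [Module ℝ V] (OU : OrderUnitSES V)

/-- The effect interval. -/
abbrev Eff := {v : V // 0 ≤ v ∧ v ≤ OU.one}

include OU

lemma sub_nonneg' {a b : V} (h : a ≤ b) : 0 ≤ b - a := by
  have := OU.add_le_add (-a) h
  simpa [sub_eq_add_neg] using this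

lemma le_of_sub_nonneg {a b : V} (h : 0 ≤ b - a) : a ≤ b := by
  have := OU.add_le_add a h
  simpa using this

lemma add_le_add'' {a b c d : V} (h1 : a ≤ b) (h2 : c ≤ d) : a + c ≤ b + d := by
  apply OU.le_of_sub_nonneg
  have h1' := OU.sub_nonneg' h1
  have h2' := OU.sub_nonneg' h2
  have h3 : (0:V) + (d-c) ≤ b - a + (d - c) := OU.add_le_add (d - c) h1'
  calc (0:V) ≤ d - c := h2'
    _ = 0 + (d-c) := by abel
    _ ≤ b - a + (d-c) := h3
    _ = b + d - (a + c) := by abel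

lemma smul_le_smul' {r : ℝ} {a b : V} (hr : 0 ≤ r) (h : a ≤ b) : r • a ≤ r • b := by
  apply OU.le_of_sub_nonneg
  have := OU.smul_nonneg hr (OU.sub_nonneg' h)
  simpa [smul_sub] using this


lemma sub_le_sub_left' {a b : V} (h : a ≤ b) (c : V) : c - b ≤ c - a := by
  apply OU.le_of_sub_nonneg
  have : c - a - (c - b) = b - a := by abel
  rw [this]
  exact OU.sub_nonneg' h

lemma le_sub_flip {a b c : V} (h : a ≤ b - c) : c ≤ b - a := by
  apply OU.le_of_sub_nonneg
  have h1 := OU.sub_nonneg' h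
  have : b - a - c = b - c - a := by abel
  rw [this]
  exact h1

lemma seq_zero_left (a : V) : OU.seq 0 a = 0 := by
  have h : (0:V) = (0:ℝ) • (0:V) := by simp
  rw [h, OU.seq_homog _ _ le_rfl]
  simp

lemma sum_nonneg'' {ι : Type*} {s : Finset ι} {f : ι → V} (h : ∀ i ∈ s, 0 ≤ f i) :
    0 ≤ ∑ i ∈ s, f i := by
  classical
  induction s using Finset.cons_induction with
  | empty => simp
  | cons a s ha ih =>
    rw [Finset.sum_cons]
    have h1 := h a (Finset.mem_cons_self a s)
    have h2 := ih (fun i hi => h i (Finset.mem_cons.mpr (Or.inr hi)))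
    have := OU.add_le_add'' h1 h2
    simpa using this

lemma one_nonneg : (0:V) ≤ OU.one := by
  have h := OU.ses.one.2.1
  rwa [OU.ses_one] at h

lemma seq_zero_right (a : V) : OU.seq a 0 = 0 := by
  have h := OU.seq_add a 0 0
  rw [add_zero] at h
  have h2 : OU.seq a 0 + OU.seq a 0 = OU.seq a 0 + 0 := by rw [← h, add_zero]
  exact (add_left_cancel h2)

lemma seq_sub (a b c : V) : OU.seq a (b - c) = OU.seq a b - OU.seq a c := by
  have h := OU.seq_add a (b - c) c
  rw [sub_add_cancel] at h
  rw [h]; abel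

lemma seq_mono2 {a x y : V} (ha : 0 ≤ a) (h : x ≤ y) : OU.seq a x ≤ OU.seq a y := by
  apply OU.le_of_sub_nonneg
  rw [← OU.seq_sub]
  exact OU.seq_pos ha (OU.sub_nonneg' h)

/-- `a ∘ 1 = a` for effects. -/
lemma seq_one_right (a : OU.Eff) : OU.seq a.1 OU.one = a.1 := by
  have h0 : OU.ses.seq a OU.ses.zero = OU.ses.zero := by
    apply Subtype.ext
    rw [OU.ses_seq, OU.ses_zero, OU.seq_zero_right]
  have h1 : OU.ses.seq OU.ses.zero a = OU.ses.zero := OU.ses.seq_orth h0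
  have h2 : OU.ses.seq a (OU.ses.compl OU.ses.zero) =
      OU.ses.seq (OU.ses.compl OU.ses.zero) a := OU.ses.seq_compl (h0.trans h1.symm)
  have h3 : OU.ses.compl OU.ses.zero = OU.ses.one := by
    apply Subtype.ext
    rw [OU.ses_compl, OU.ses_zero, OU.ses_one, sub_zero]
  rw [h3] at h2
  have h4 := congrArg Subtype.val h2
  rw [OU.ses_seq, OU.ses_seq, OU.ses_one] at h4
  rw [h4, OU.one_seq]

/-- The canonical order on effects: `pLe` is just the order of values. -/
lemma pLe_iff {x y : OU.Eff} : pLe OU.ses.D OU.ses.add x y ↔ x.1 ≤ y.1 := by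
  constructor
  · rintro ⟨c, hD, hadd⟩
    have hv : (OU.ses.add x c).1 = x.1 + c.1 := OU.ses_add x c hD
    rw [hadd] at hv
    rw [hv]
    have := OU.add_le_add x.1 c.2.1
    simpa [add_comm] using this
  · intro h
    have hyx1 : y.1 - x.1 ≤ OU.one := by
      have h1 : y.1 - x.1 ≤ y.1 - 0 := by
        apply OU.le_of_sub_nonneg
        have : y.1 - 0 - (y.1 - x.1) = x.1 := by abel
        rw [this]; exact x.2.1
      rw [sub_zero] at h1
      exact h1.trans y.2.2
    have hD : OU.ses.D x ⟨y.1 - x.1, OU.sub_nonneg' h, hyx1⟩ := by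
      rw [OU.ses_D]
      show x.1 + (y.1 - x.1) ≤ OU.one
      have : x.1 + (y.1 - x.1) = y.1 := by abel
      rw [this]; exact y.2.2
    refine ⟨_, hD, ?_⟩
    apply Subtype.ext
    rw [OU.ses_add _ _ hD]
    show x.1 + (y.1 - x.1) = y.1
    abel

end OrderUnitSES

namespace OrderUnitSES

variable {V : Type*} [AddCommGroup V] [PartialOrder V] [Module ℝ V] {OU : OrderUnitSES V}

/-- Commutation of effects. -/
def CommE (a b : OU.Eff) : Prop := OU.ses.seq a b = OU.ses.seq b a

lemma commE_refl (a : OU.Eff) : CommE a a := rfl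

lemma commE_symm {a b : OU.Eff} (h : CommE a b) : CommE b a := h.symm

lemma commE_val {a b : OU.Eff} (h : CommE a b) : OU.seq a.1 b.1 = OU.seq b.1 a.1 := by
  have := congrArg Subtype.val h
  rwa [OU.ses_seq, OU.ses_seq] at this

lemma commE_of_val {a b : OU.Eff} (h : OU.seq a.1 b.1 = OU.seq b.1 a.1) : CommE a b := by
  apply Subtype.ext
  rwa [OU.ses_seq, OU.ses_seq]

lemma commE_seq {a b c : OU.Eff} (h1 : CommE c a) (h2 : CommE c b) :
    CommE c (OU.ses.seq a b) := OU.ses.comm_seq h1 h2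

lemma commE_add {a b c : OU.Eff} (h1 : CommE c a) (h2 : CommE c b)
    (hD : OU.ses.D a b) : CommE c (OU.ses.add a b) := OU.ses.comm_add h1 h2 hD

lemma commE_compl {a b : OU.Eff} (h : CommE a b) : CommE a (OU.ses.compl b) :=
  OU.ses.seq_compl h

lemma commE_smul {r : ℝ} {a c : OU.Eff} (hr0 : 0 ≤ r) (hr1 : r ≤ 1) (h : CommE c a) :
    CommE c (OU.ses.smul r a) := by
  apply commE_of_val
  rw [OU.ses_smul r a hr0 hr1, OU.seq_smul, OU.seq_homog _ _ hr0, commE_val h]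

lemma commE_zero (c : OU.Eff) : CommE c OU.ses.zero := by
  apply commE_of_val
  rw [OU.ses_zero, seq_zero_left, seq_zero_right]

/-- Decreasing sequences of effects. -/
def DecE (f : ℕ → OU.Eff) : Prop := ∀ n, pLe OU.ses.D OU.ses.add (f (n + 1)) (f n)

/-- Increasing (in value) sequences of effects. -/
def IncE (f : ℕ → OU.Eff) : Prop := ∀ n, (f n).1 ≤ (f (n + 1)).1

lemma decE_of_val {f : ℕ → OU.Eff} (h : ∀ n, (f (n+1)).1 ≤ (f n).1) : DecE f :=
  fun n => OU.pLe_iff.mpr (h n)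

lemma inf_le_val {f : ℕ → OU.Eff} (hf : DecE f) (n : ℕ) :
    (OU.ses.inf f).1 ≤ (f n).1 := OU.pLe_iff.mp (OU.ses.inf_le hf n)

lemma le_inf_val {f : ℕ → OU.Eff} (hf : DecE f) (x : OU.Eff)
    (h : ∀ n, x.1 ≤ (f n).1) : x.1 ≤ (OU.ses.inf f).1 :=
  OU.pLe_iff.mp (OU.ses.le_inf hf x (fun n => OU.pLe_iff.mpr (h n)))

lemma commE_inf {f : ℕ → OU.Eff} {b : OU.Eff} (hf : DecE f)
    (h : ∀ n, CommE b (f n)) : CommE b (OU.ses.inf f) := OU.ses.comm_inf hf h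

/-- Supremum of an (increasing) sequence of effects. -/
def SUPE (f : ℕ → OU.Eff) : OU.Eff := OU.ses.compl (OU.ses.inf (fun n => OU.ses.compl (f n)))

lemma compl_dec {f : ℕ → OU.Eff} (hf : IncE f) : DecE (fun n => OU.ses.compl (f n)) := by
  apply decE_of_val
  intro n
  rw [OU.ses_compl, OU.ses_compl]
  exact OU.sub_le_sub_left' (hf n) _

lemma le_SUP {f : ℕ → OU.Eff} (hf : IncE f) (n : ℕ) : (f n).1 ≤ (SUPE f).1 := by
  have h := inf_le_val (compl_dec hf) n
  rw [OU.ses_compl] at h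
  have h2 := OU.le_sub_flip h
  rwa [SUPE, OU.ses_compl]

lemma SUP_le {f : ℕ → OU.Eff} (hf : IncE f) (z : OU.Eff)
    (h : ∀ n, (f n).1 ≤ z.1) : (SUPE f).1 ≤ z.1 := by
  have h1 : (OU.ses.compl z).1 ≤ (OU.ses.inf (fun n => OU.ses.compl (f n))).1 := by
    apply le_inf_val (compl_dec hf)
    intro n
    rw [OU.ses_compl, OU.ses_compl]
    exact OU.sub_le_sub_left' (h n) _
  rw [OU.ses_compl] at h1
  rw [SUPE, OU.ses_compl]
  have h2 := OU.sub_le_sub_left' h1 OU.one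
  have heq : OU.one - (OU.one - z.1) = z.1 := by abel
  rwa [heq] at h2

lemma commE_SUP {f : ℕ → OU.Eff} {b : OU.Eff} (hf : IncE f)
    (h : ∀ n, CommE b (f n)) : CommE b (SUPE f) :=
  commE_compl (commE_inf (compl_dec hf) (fun n => commE_compl (h n)))

lemma seq_compl_val (b : OU.Eff) (x : OU.Eff) :
    OU.seq b.1 (OU.ses.compl x).1 = b.1 - OU.seq b.1 x.1 := by
  rw [OU.ses_compl, OU.seq_sub, OU.seq_one_right]

lemma seq_le_self (b x : OU.Eff) : OU.seq b.1 x.1 ≤ b.1 := by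
  have := OU.seq_mono2 b.2.1 x.2.2
  rwa [OU.seq_one_right] at this

/-- The sequential product commutes with suprema of increasing sequences. -/
lemma seqSUP {f : ℕ → OU.Eff} (hf : IncE f) (b : OU.Eff) :
    OU.seq b.1 (SUPE f).1 = (SUPE (fun n => OU.ses.seq b (f n))).1 := by
  set I := OU.ses.inf (fun n => OU.ses.seq b (OU.ses.compl (f n))) with hI
  set J := SUPE (fun n => OU.ses.seq b (f n)) with hJ
  have hbfInc : IncE (fun n => OU.ses.seq b (f n)) := by
    intro n
    rw [OU.ses_seq, OU.ses_seq]
    exact OU.seq_mono2 b.2.1 (hf n)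
  have hseqinf := OU.ses.seq_inf (f := fun n => OU.ses.compl (f n)) b (compl_dec hf)
  have hval : OU.seq b.1 (SUPE f).1 = b.1 - I.1 := by
    rw [SUPE, seq_compl_val]
    have : OU.seq b.1 (OU.ses.inf fun n => OU.ses.compl (f n)).1
        = (OU.ses.seq b (OU.ses.inf fun n => OU.ses.compl (f n))).1 := by
      rw [OU.ses_seq]
    rw [this, hseqinf]
  have hIdec : DecE (fun n => OU.ses.seq b (OU.ses.compl (f n))) := by
    apply decE_of_val
    intro n
    rw [OU.ses_seq, OU.ses_seq, OU.ses_compl, OU.ses_compl]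
    exact OU.seq_mono2 b.2.1 (OU.sub_le_sub_left' (hf n) _)
  have hIval : ∀ n, (OU.ses.seq b (OU.ses.compl (f n))).1 = b.1 - OU.seq b.1 (f n).1 := by
    intro n
    rw [OU.ses_seq, seq_compl_val]
  -- I ≤ b
  have hIleb : I.1 ≤ b.1 := by
    have := inf_le_val hIdec 0
    rw [hIval 0] at this
    refine this.trans ?_
    apply OU.le_of_sub_nonneg
    have heq : b.1 - (b.1 - OU.seq b.1 (f 0).1) = OU.seq b.1 (f 0).1 := by abel
    rw [heq]
    exact OU.seq_pos b.2.1 (f 0).2.1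
  -- J ≤ b
  have hJleb : J.1 ≤ b.1 := by
    apply SUP_le hbfInc b
    intro n
    rw [OU.ses_seq]
    exact seq_le_self b (f n)
  -- J ≤ b - I
  have h1 : J.1 ≤ b.1 - I.1 := by
    have hz : (0:V) ≤ b.1 - I.1 := OU.sub_nonneg' hIleb
    have hz2 : b.1 - I.1 ≤ OU.one := by
      have : b.1 - I.1 ≤ b.1 - 0 := OU.sub_le_sub_left' I.2.1 _
      rw [sub_zero] at this
      exact this.trans b.2.2
    apply SUP_le hbfInc ⟨b.1 - I.1, hz, hz2⟩
    intro n
    show (OU.ses.seq b (f n)).1 ≤ b.1 - I.1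
    rw [OU.ses_seq]
    apply OU.le_sub_flip
    have := inf_le_val hIdec n
    rwa [hIval n] at this
  -- b - J ≤ I
  have h2 : b.1 - J.1 ≤ I.1 := by
    have hz : (0:V) ≤ b.1 - J.1 := OU.sub_nonneg' hJleb
    have hz2 : b.1 - J.1 ≤ OU.one := by
      have : b.1 - J.1 ≤ b.1 - 0 := OU.sub_le_sub_left' J.2.1 _
      rw [sub_zero] at this
      exact this.trans b.2.2
    apply le_inf_val hIdec ⟨b.1 - J.1, hz, hz2⟩
    intro n
    show b.1 - J.1 ≤ (OU.ses.seq b (OU.ses.compl (f n))).1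
    rw [hIval n]
    apply OU.sub_le_sub_left'
    have := le_SUP hbfInc n
    rwa [OU.ses_seq] at this
  have hIJ : I.1 = b.1 - J.1 := le_antisymm (OU.le_sub_flip h1) h2
  rw [hval, hIJ]
  abel

lemma SUP_shift {f : ℕ → OU.Eff} (hf : IncE f) :
    (SUPE (fun n => f (n + 1))).1 = (SUPE f).1 := by
  have hf' : IncE (fun n => f (n+1)) := fun n => hf (n+1)
  apply le_antisymm
  · apply SUP_le hf' (SUPE f)
    intro n
    exact le_SUP hf (n+1)
  · apply SUP_le hf (SUPE (fun n => f (n+1)))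
    intro n
    exact (hf n).trans (le_SUP hf' n)

lemma SUP_smul_half {f : ℕ → OU.Eff} (hf : IncE f) :
    (SUPE (fun n => OU.ses.smul (1/2 : ℝ) (f n))).1 = (1/2 : ℝ) • (SUPE f).1 := by
  have hsv : ∀ x : OU.Eff, (OU.ses.smul (1/2 : ℝ) x).1 = (1/2 : ℝ) • x.1 := fun x =>
    OU.ses_smul _ x (by norm_num) (by norm_num)
  have hf2 : IncE (fun n => OU.ses.smul (1/2 : ℝ) (f n)) := by
    intro n
    rw [hsv, hsv]
    exact OU.smul_le_smul' (by norm_num) (hf n)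
  set X := SUPE (fun n => OU.ses.smul (1/2 : ℝ) (f n)) with hX
  have hXle : X.1 ≤ (OU.ses.smul (1/2 : ℝ) (SUPE f)).1 := by
    apply SUP_le hf2
    intro n
    rw [hsv, hsv]
    exact OU.smul_le_smul' (by norm_num) (le_SUP hf n)
  rw [hsv] at hXle
  have hXhalf : X.1 ≤ (OU.ses.smul (1/2 : ℝ) OU.ses.one).1 := by
    apply SUP_le hf2
    intro n
    rw [hsv, hsv]
    rw [OU.ses_one]
    exact OU.smul_le_smul' (by norm_num) (f n).2.2
  have h2X : (2:ℝ) • X.1 ≤ OU.one := by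
    rw [hsv, OU.ses_one] at hXhalf
    have := OU.smul_le_smul' (by norm_num : (0:ℝ) ≤ 2) hXhalf
    rwa [smul_smul, (by norm_num : (2:ℝ) * (1/2) = 1), one_smul] at this
  have hge : (SUPE f).1 ≤ (2:ℝ) • X.1 := by
    apply SUP_le hf ⟨(2:ℝ) • X.1, OU.smul_nonneg (by norm_num) X.2.1, h2X⟩
    intro n
    have h1 : (1/2 : ℝ) • (f n).1 ≤ X.1 := by
      have := le_SUP hf2 n
      rwa [hsv] at this
    have := OU.smul_le_smul' (by norm_num : (0:ℝ) ≤ 2) h1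
    rwa [smul_smul, (by norm_num : (2:ℝ) * (1/2) = 1), one_smul] at this
  apply le_antisymm hXle
  have := OU.smul_le_smul' (by norm_num : (0:ℝ) ≤ (1/2:ℝ)) hge
  rwa [smul_smul, (by norm_num : (1/2:ℝ) * 2 = 1), one_smul] at this

end OrderUnitSES

namespace OrderUnitSES

variable {V : Type*} [AddCommGroup V] [PartialOrder V] [Module ℝ V] {OU : OrderUnitSES V}

lemma halfD (x y : OU.Eff) :
    OU.ses.D (OU.ses.smul (1/2 : ℝ) x) (OU.ses.smul (1/2 : ℝ) y) := by
  rw [OU.ses_D, OU.ses_smul _ _ (by norm_num) (by norm_num),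
    OU.ses_smul _ _ (by norm_num) (by norm_num)]
  have h1 := OU.smul_le_smul' (by norm_num : (0:ℝ) ≤ 1/2) x.2.2
  have h2 := OU.smul_le_smul' (by norm_num : (0:ℝ) ≤ 1/2) y.2.2
  have h3 := OU.add_le_add'' h1 h2
  have : (1/2:ℝ) • OU.one + (1/2:ℝ) • OU.one = OU.one := by module
  rwa [this] at h3

lemma smul_half_val (x : OU.Eff) : (OU.ses.smul (1/2 : ℝ) x).1 = (1/2 : ℝ) • x.1 :=
  OU.ses_smul _ x (by norm_num) (by norm_num)

/-- Newton–type iteration converging (from below) to `1 - √(1-w)`. -/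
noncomputable def newt (w : OU.Eff) : ℕ → OU.Eff := fun m =>
  Nat.rec OU.ses.zero (fun _ S => OU.ses.add (OU.ses.smul (1/2 : ℝ) w)
      (OU.ses.smul (1/2 : ℝ) (OU.ses.seq S S))) m

lemma newt_zero_val (w : OU.Eff) : (newt w 0).1 = 0 := OU.ses_zero

lemma newt_succ_val (w : OU.Eff) (m : ℕ) :
    (newt w (m+1)).1 = (1/2:ℝ) • w.1 + (1/2:ℝ) • (OU.seq (newt w m).1 (newt w m).1) := by
  show (OU.ses.add _ _).1 = _
  rw [OU.ses_add _ _ (halfD _ _), smul_half_val, smul_half_val, OU.ses_seq]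
  rfl

lemma commE_newt {c w : OU.Eff} (hc : CommE c w) : ∀ m, CommE c (newt w m)
  | 0 => commE_zero c
  | (m+1) => commE_add (commE_smul (by norm_num) (by norm_num) hc)
      (commE_smul (by norm_num) (by norm_num)
        (commE_seq (commE_newt hc m) (commE_newt hc m))) (halfD _ _)

lemma commE_w_newt (w : OU.Eff) (m : ℕ) : CommE w (newt w m) :=
  commE_newt (commE_refl w) m

lemma commE_newt_newt (w : OU.Eff) (k m : ℕ) : CommE (newt w k) (newt w m) :=
  commE_newt (commE_symm (commE_w_newt w k)) m

lemma sq_le_sq {a b : OU.Eff} (hc : CommE a b) (h : b.1 ≤ a.1) :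
    OU.seq b.1 b.1 ≤ OU.seq a.1 a.1 :=
  calc OU.seq b.1 b.1 ≤ OU.seq b.1 a.1 := OU.seq_mono2 b.2.1 h
    _ = OU.seq a.1 b.1 := (commE_val hc).symm
    _ ≤ OU.seq a.1 a.1 := OU.seq_mono2 a.2.1 h

lemma newt_mono (w : OU.Eff) : IncE (newt w) := by
  intro m
  induction m with
  | zero =>
    rw [newt_zero_val]
    exact (newt w 1).2.1
  | succ m IH =>
    rw [newt_succ_val, newt_succ_val]
    exact OU.add_le_add'' le_rfl (OU.smul_le_smul' (by norm_num)
      (sq_le_sq (commE_newt_newt w (m+1) m) IH))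

lemma newt_le_newt (w : OU.Eff) {k m : ℕ} (h : k ≤ m) : (newt w k).1 ≤ (newt w m).1 :=
  monotone_nat_of_le_succ (newt_mono w) h

lemma newt_sq_inc (w : OU.Eff) : IncE (fun m => OU.ses.seq (newt w m) (newt w m)) := by
  intro m
  show (OU.ses.seq _ _).1 ≤ (OU.ses.seq _ _).1
  rw [OU.ses_seq, OU.ses_seq]
  exact sq_le_sq (commE_newt_newt w (m+1) m) (newt_mono w m)

/-- `newtT w = 1 - √(1-w)`, as supremum of the Newton iterates. -/
noncomputable def newtT (w : OU.Eff) : OU.Eff := SUPE (newt w)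

lemma commE_newtT {c w : OU.Eff} (hc : CommE c w) : CommE c (newtT w) :=
  commE_SUP (newt_mono w) (fun m => commE_newt hc m)

lemma commE_newt_newtT (w : OU.Eff) (m : ℕ) : CommE (newt w m) (newtT w) :=
  commE_newtT (commE_symm (commE_w_newt w m))

lemma newtT_sq (w : OU.Eff) : OU.seq (newtT w).1 (newtT w).1
    = (SUPE (fun m => OU.ses.seq (newt w m) (newt w m))).1 := by
  set T := newtT w with hT
  set L := SUPE (fun m => OU.ses.seq (newt w m) (newt w m)) with hL
  have hTm : ∀ m, OU.ses.seq T (newt w m) = OU.ses.seq (newt w m) T :=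
    fun m => (commE_newt_newtT w m).symm
  have hstep1 : OU.seq T.1 T.1 = (SUPE (fun m => OU.ses.seq T (newt w m))).1 :=
    seqSUP (newt_mono w) T
  have hincA : IncE (fun m => OU.ses.seq T (newt w m)) := by
    intro m
    show (OU.ses.seq _ _).1 ≤ (OU.ses.seq _ _).1
    rw [OU.ses_seq, OU.ses_seq]
    exact OU.seq_mono2 T.2.1 (newt_mono w m)
  rw [hstep1]
  apply le_antisymm
  · apply SUP_le hincA L
    intro m
    rw [hTm m, OU.ses_seq]
    have h2 : OU.seq (newt w m).1 T.1
        = (SUPE (fun k => OU.ses.seq (newt w m) (newt w k))).1 :=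
      seqSUP (newt_mono w) (newt w m)
    rw [h2]
    apply SUP_le
    · intro k
      show (OU.ses.seq _ _).1 ≤ (OU.ses.seq _ _).1
      rw [OU.ses_seq, OU.ses_seq]
      exact OU.seq_mono2 (newt w m).2.1 (newt_mono w k)
    · intro k
      rw [OU.ses_seq]
      calc OU.seq (newt w m).1 (newt w k).1
          ≤ OU.seq (newt w m).1 (newt w (max m k)).1 :=
            OU.seq_mono2 (newt w m).2.1 (newt_le_newt w (le_max_right m k))
        _ = OU.seq (newt w (max m k)).1 (newt w m).1 :=
            commE_val (commE_newt_newt w m (max m k))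
        _ ≤ OU.seq (newt w (max m k)).1 (newt w (max m k)).1 :=
            OU.seq_mono2 (newt w (max m k)).2.1 (newt_le_newt w (le_max_left m k))
        _ ≤ L.1 := by
            have := le_SUP (newt_sq_inc w) (max m k)
            rwa [OU.ses_seq] at this
  · apply SUP_le (newt_sq_inc w) _
    intro j
    have h1 : (OU.ses.seq (newt w j) (newt w j)).1 ≤ (OU.ses.seq T (newt w j)).1 := by
      rw [hTm j, OU.ses_seq, OU.ses_seq]
      exact OU.seq_mono2 (newt w j).2.1 (le_SUP (newt_mono w) j)
    exact h1.trans (le_SUP hincA j)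

lemma newtT_fix (w : OU.Eff) :
    (newtT w).1 = (1/2:ℝ) • w.1 + (1/2:ℝ) • (OU.seq (newtT w).1 (newtT w).1) := by
  set T := newtT w with hT
  set L := SUPE (fun m => OU.ses.seq (newt w m) (newt w m)) with hL
  have hLval : ∀ m, (OU.ses.seq (newt w m) (newt w m)).1
      = OU.seq (newt w m).1 (newt w m).1 := fun m => OU.ses_seq _ _
  have hinc' : IncE (fun n => newt w (n+1)) := fun n => newt_mono w (n+1)
  have h0 : (SUPE (fun n => newt w (n+1))).1 = T.1 := SUP_shift (newt_mono w)
  set S' := SUPE (fun n => newt w (n+1)) with hS'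
  have hZD := halfD (OU := OU) w L
  have hZval : (OU.ses.add (OU.ses.smul (1/2:ℝ) w) (OU.ses.smul (1/2:ℝ) L)).1
      = (1/2:ℝ) • w.1 + (1/2:ℝ) • L.1 := by
    rw [OU.ses_add _ _ hZD, smul_half_val, smul_half_val]
  have hle : S'.1 ≤ (1/2:ℝ) • w.1 + (1/2:ℝ) • L.1 := by
    rw [← hZval]
    apply SUP_le hinc'
    intro n
    rw [hZval, newt_succ_val]
    apply OU.add_le_add'' le_rfl
    apply OU.smul_le_smul' (by norm_num)
    have := le_SUP (newt_sq_inc w) n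
    rwa [OU.ses_seq] at this
  have hwS : (1/2:ℝ) • w.1 ≤ S'.1 := by
    have h1 := le_SUP hinc' 0
    have h2 : (newt w 1).1 = (1/2:ℝ) • w.1 := by
      rw [newt_succ_val, newt_zero_val, seq_zero_left]
      module
    rw [h2] at h1
    exact h1
  have hY0 : (0:V) ≤ (2:ℝ) • S'.1 - w.1 := by
    have := OU.smul_le_smul' (by norm_num : (0:ℝ) ≤ 2) hwS
    have h2 : (2:ℝ) • ((1/2:ℝ) • w.1) = w.1 := by module
    rw [h2] at this
    exact OU.sub_nonneg' this
  have hY1 : (2:ℝ) • S'.1 - w.1 ≤ OU.one := by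
    have hup : S'.1 ≤ (1/2:ℝ) • w.1 + (1/2:ℝ) • OU.one := by
      have hD2 := halfD (OU := OU) w OU.ses.one
      have hv2 : (OU.ses.add (OU.ses.smul (1/2:ℝ) w) (OU.ses.smul (1/2:ℝ) OU.ses.one)).1
          = (1/2:ℝ) • w.1 + (1/2:ℝ) • OU.one := by
        rw [OU.ses_add _ _ hD2, smul_half_val, smul_half_val, OU.ses_one]
      rw [← hv2]
      apply SUP_le hinc'
      intro n
      rw [hv2, newt_succ_val]
      apply OU.add_le_add'' le_rfl
      apply OU.smul_le_smul' (by norm_num)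
      have := (OU.ses.seq (newt w n) (newt w n)).2.2
      rwa [OU.ses_seq] at this
    apply OU.le_of_sub_nonneg
    have h3 := OU.smul_le_smul' (by norm_num : (0:ℝ) ≤ 2) hup
    have h4 : (2:ℝ) • ((1/2:ℝ) • w.1 + (1/2:ℝ) • OU.one) = w.1 + OU.one := by module
    rw [h4] at h3
    have h5 := OU.sub_nonneg' h3
    have h6 : w.1 + OU.one - (2:ℝ) • S'.1 = OU.one - ((2:ℝ) • S'.1 - w.1) := by abel
    rwa [h6] at h5
  have hgeL : L.1 ≤ (2:ℝ) • S'.1 - w.1 := by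
    apply SUP_le (newt_sq_inc w) ⟨(2:ℝ) • S'.1 - w.1, hY0, hY1⟩
    intro n
    rw [hLval]
    have h1 := le_SUP hinc' n
    rw [newt_succ_val] at h1
    have h2 := OU.smul_le_smul' (by norm_num : (0:ℝ) ≤ 2) h1
    have h3 : (2:ℝ) • ((1/2:ℝ) • w.1 + (1/2:ℝ) • (OU.seq (newt w n).1 (newt w n).1))
        = w.1 + OU.seq (newt w n).1 (newt w n).1 := by module
    rw [h3] at h2
    apply OU.le_of_sub_nonneg
    have h5 := OU.sub_nonneg' h2
    have h6 : (2:ℝ) • S'.1 - (w.1 + OU.seq (newt w n).1 (newt w n).1)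
        = (2:ℝ) • S'.1 - w.1 - OU.seq (newt w n).1 (newt w n).1 := by abel
    rwa [h6] at h5
  have hge : (1/2:ℝ) • w.1 + (1/2:ℝ) • L.1 ≤ S'.1 := by
    have h1 := OU.smul_le_smul' (by norm_num : (0:ℝ) ≤ (1/2:ℝ)) hgeL
    have h2 := OU.add_le_add'' (le_refl ((1/2:ℝ) • w.1)) h1
    have h3 : (1/2:ℝ) • w.1 + (1/2:ℝ) • ((2:ℝ) • S'.1 - w.1) = S'.1 := by module
    rwa [h3] at h2
  have hLT : L.1 = OU.seq T.1 T.1 := (newtT_sq w).symm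
  rw [← hLT, ← h0]
  exact le_antisymm hle hge

/-- Square root of an effect. -/
noncomputable def sqrtE (g : OU.Eff) : OU.Eff := OU.ses.compl (newtT (OU.ses.compl g))

lemma sqrtE_sq (g : OU.Eff) : OU.seq (sqrtE g).1 (sqrtE g).1 = g.1 := by
  set w := OU.ses.compl g with hw
  set T := newtT w with hT
  have hA : (sqrtE g) = OU.ses.compl T := rfl
  have hAval : (sqrtE g).1 = OU.one - T.1 := by rw [hA, OU.ses_compl]
  have hSq : OU.seq T.1 T.1 = (2:ℝ) • T.1 - w.1 := by
    have h := newtT_fix w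
    have h2 := congrArg (fun v => (2:ℝ) • v) h
    have h3 : (2:ℝ) • ((1/2:ℝ) • w.1 + (1/2:ℝ) • OU.seq T.1 T.1)
        = w.1 + OU.seq T.1 T.1 := by module
    rw [h3] at h2
    have : OU.seq T.1 T.1 = (2:ℝ) • T.1 - w.1 := by
      rw [h2]; abel
    exact this
  have hcomm : OU.seq (sqrtE g).1 T.1 = OU.seq T.1 (sqrtE g).1 := by
    rw [hA]
    exact (commE_val (commE_compl (commE_refl T))).symm
  have h1 : OU.seq (sqrtE g).1 (sqrtE g).1 = (sqrtE g).1 - OU.seq (sqrtE g).1 T.1 := by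
    rw [hA]
    exact seq_compl_val (OU.ses.compl T) T
  have h2 : OU.seq T.1 (sqrtE g).1 = T.1 - OU.seq T.1 T.1 := by
    rw [hA]
    exact seq_compl_val T T
  rw [h1, hcomm, h2, hSq, hAval]
  have hwv : w.1 = OU.one - g.1 := OU.ses_compl g
  rw [hwv]
  have h2T : (2:ℝ) • T.1 = T.1 + T.1 := two_smul ℝ T.1
  rw [h2T]
  abel

end OrderUnitSES

namespace OrderUnitSES

variable {V : Type*} [AddCommGroup V] [PartialOrder V] [Module ℝ V] {OU : OrderUnitSES V}

/-- Left sequential multiplication as a linear map. -/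
noncomputable def seqL (a : V) : V →ₗ[ℝ] V where
  toFun := OU.seq a
  map_add' := fun x y => OU.seq_add a x y
  map_smul' := fun r x => by simp [OU.seq_smul]

@[simp] lemma seqL_apply (a x : V) : seqL (OU := OU) a x = OU.seq a x := rfl

lemma commE_one (c : OU.Eff) : CommE c OU.ses.one := by
  apply commE_of_val
  rw [OU.ses_one, OU.seq_one_right c, OU.one_seq]

/-- Powers of an effect. -/
noncomputable def pw (e : OU.Eff) : ℕ → OU.Eff := fun k =>
  Nat.rec OU.ses.one (fun _ u => OU.ses.seq e u) k

lemma commE_pw {c e : OU.Eff} (h : CommE c e) : ∀ k, CommE c (pw e k)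
  | 0 => commE_one c
  | (k+1) => commE_seq h (commE_pw h k)

/-- Bernstein-type monomials `e^k (1-e)^j`. -/
noncomputable def Gf (e : OU.Eff) (k j : ℕ) : OU.Eff :=
  OU.ses.seq (pw e k) (pw (OU.ses.compl e) j)

lemma G_succ_left (e : OU.Eff) (k j : ℕ) :
    Gf e (k+1) j = OU.ses.seq e (Gf e k j) :=
  (OU.ses.seq_assoc (commE_pw (commE_refl e) k) _).symm

lemma G_succ_right (e : OU.Eff) (k j : ℕ) :
    Gf e k (j+1) = OU.ses.seq (OU.ses.compl e) (Gf e k j) := by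
  have hde : CommE (OU.ses.compl e) e := commE_symm (commE_compl (commE_refl e))
  have h1 : CommE (OU.ses.compl e) (pw e k) := commE_pw hde k
  calc Gf e k (j+1) = OU.ses.seq (pw e k) (OU.ses.seq (OU.ses.compl e) (pw (OU.ses.compl e) j)) := rfl
    _ = OU.ses.seq (OU.ses.seq (pw e k) (OU.ses.compl e)) (pw (OU.ses.compl e) j) :=
        OU.ses.seq_assoc (commE_symm h1) _
    _ = OU.ses.seq (OU.ses.seq (OU.ses.compl e) (pw e k)) (pw (OU.ses.compl e) j) := by
        rw [commE_symm h1]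
    _ = OU.ses.seq (OU.ses.compl e) (Gf e k j) := (OU.ses.seq_assoc h1 _).symm

lemma G_succ_both (e : OU.Eff) (k j : ℕ) :
    Gf e (k+1) (j+1) = OU.ses.seq (OU.ses.seq e (OU.ses.compl e)) (Gf e k j) := by
  rw [G_succ_left, G_succ_right]
  exact OU.ses.seq_assoc (commE_compl (commE_refl e)) _

lemma G00 (e : OU.Eff) : Gf e 0 0 = OU.ses.one := OU.ses.one_seq OU.ses.one

/-- The Bernstein partition-of-unity identity. -/
lemma sum_G (e : OU.Eff) : ∀ N : ℕ,
    ∑ k ∈ Finset.range (N+1), ((N.choose k : ℝ)) • (Gf e k (N - k)).1 = OU.one := by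
  intro N
  induction N with
  | zero =>
    rw [Finset.sum_range_one]
    simp [G00, OU.ses_one]
  | succ N ih =>
    set d := OU.ses.compl e with hd
    have hsumd : ∑ k ∈ Finset.range (N+1), ((N.choose k : ℝ)) • (Gf e k ((N - k)+1)).1
        = d.1 := by
      have : ∀ k, (Gf e k ((N-k)+1)).1 = OU.seq d.1 (Gf e k (N-k)).1 := by
        intro k
        rw [G_succ_right, OU.ses_seq]
      calc ∑ k ∈ Finset.range (N+1), ((N.choose k : ℝ)) • (Gf e k ((N - k)+1)).1
          = ∑ k ∈ Finset.range (N+1), ((N.choose k : ℝ)) • (seqL (OU := OU) d.1 (Gf e k (N - k)).1) := by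
            apply Finset.sum_congr rfl
            intro k _
            rw [this k, seqL_apply]
        _ = seqL (OU := OU) d.1 (∑ k ∈ Finset.range (N+1), ((N.choose k : ℝ)) • (Gf e k (N - k)).1) := by
            rw [map_sum]
            apply Finset.sum_congr rfl
            intro k _
            rw [map_smul]
        _ = d.1 := by rw [ih, seqL_apply, OU.seq_one_right d]
    have hsume : ∑ k ∈ Finset.range (N+1), ((N.choose k : ℝ)) • (Gf e (k+1) (N - k)).1
        = e.1 := by
      have : ∀ k, (Gf e (k+1) (N-k)).1 = OU.seq e.1 (Gf e k (N-k)).1 := by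
        intro k
        rw [G_succ_left, OU.ses_seq]
      calc ∑ k ∈ Finset.range (N+1), ((N.choose k : ℝ)) • (Gf e (k+1) (N - k)).1
          = ∑ k ∈ Finset.range (N+1), ((N.choose k : ℝ)) • (seqL (OU := OU) e.1 (Gf e k (N - k)).1) := by
            apply Finset.sum_congr rfl
            intro k _
            rw [this k, seqL_apply]
        _ = seqL (OU := OU) e.1 (∑ k ∈ Finset.range (N+1), ((N.choose k : ℝ)) • (Gf e k (N - k)).1) := by
            rw [map_sum]
            apply Finset.sum_congr rfl
            intro k _
            rw [map_smul]
        _ = e.1 := by rw [ih, seqL_apply, OU.seq_one_right e]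
    have hmain : ∑ k ∈ Finset.range (N+2), (((N+1).choose k : ℝ)) • (Gf e k (N + 1 - k)).1
        = e.1 + d.1 := by
      rw [Finset.sum_range_succ']
      have hformula : ∀ k, (((N+1).choose (k+1) : ℝ)) • (Gf e (k+1) (N + 1 - (k+1))).1
          = ((N.choose k : ℝ)) • (Gf e (k+1) (N - k)).1
            + ((N.choose (k+1) : ℝ)) • (Gf e (k+1) (N - k)).1 := by
        intro k
        have h1 : N + 1 - (k + 1) = N - k := by omega
        rw [h1, Nat.choose_succ_succ, Nat.cast_add, add_smul]
      rw [Finset.sum_congr rfl (fun k _ => hformula k), Finset.sum_add_distrib, hsume]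
      -- remaining: second sum + the k = 0 term equals d
      have hh : ∑ k ∈ Finset.range (N+1), ((N.choose (k+1) : ℝ)) • (Gf e (k+1) (N - k)).1
          + (((N+1).choose 0 : ℝ)) • (Gf e 0 (N + 1 - 0)).1 = d.1 := by
        have hsplit : ∑ j ∈ Finset.range (N+2), ((N.choose j : ℝ)) • (Gf e j (N + 1 - j)).1
            = ∑ k ∈ Finset.range (N+1), ((N.choose (k+1) : ℝ)) • (Gf e (k+1) (N + 1 - (k+1))).1
              + ((N.choose 0 : ℝ)) • (Gf e 0 (N + 1)).1 := by
          rw [Finset.sum_range_succ']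
          norm_num
        have htop : ∑ j ∈ Finset.range (N+2), ((N.choose j : ℝ)) • (Gf e j (N + 1 - j)).1
            = ∑ j ∈ Finset.range (N+1), ((N.choose j : ℝ)) • (Gf e j (N + 1 - j)).1 := by
          rw [Finset.sum_range_succ]
          simp [Nat.choose_eq_zero_of_lt (by omega : N < N + 1)]
        have hmid : ∑ j ∈ Finset.range (N+1), ((N.choose j : ℝ)) • (Gf e j (N + 1 - j)).1
            = ∑ j ∈ Finset.range (N+1), ((N.choose j : ℝ)) • (Gf e j ((N - j) + 1)).1 := by
          apply Finset.sum_congr rfl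
          intro j hj
          have : N + 1 - j = (N - j) + 1 := by
            have := Finset.mem_range.mp hj
            omega
          rw [this]
        have hidx : ∀ k, N + 1 - (k+1) = N - k := fun k => by omega
        calc ∑ k ∈ Finset.range (N+1), ((N.choose (k+1) : ℝ)) • (Gf e (k+1) (N - k)).1
              + (((N+1).choose 0 : ℝ)) • (Gf e 0 (N + 1 - 0)).1
            = ∑ k ∈ Finset.range (N+1), ((N.choose (k+1) : ℝ)) • (Gf e (k+1) (N + 1 - (k+1))).1
              + ((N.choose 0 : ℝ)) • (Gf e 0 (N + 1)).1 := by
              simp [hidx]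
          _ = ∑ j ∈ Finset.range (N+2), ((N.choose j : ℝ)) • (Gf e j (N + 1 - j)).1 := hsplit.symm
          _ = ∑ j ∈ Finset.range (N+1), ((N.choose j : ℝ)) • (Gf e j ((N - j) + 1)).1 := by
              rw [htop, hmid]
          _ = d.1 := hsumd
      rw [add_assoc, hh]
    rw [hmain, OU.ses_compl]
    abel

end OrderUnitSES

namespace OrderUnitSES

variable {V : Type*} [AddCommGroup V] [PartialOrder V] [Module ℝ V] {OU : OrderUnitSES V}

lemma choose_coef (M k : ℕ) (hk : k ≤ M) :
    (k+1) * ((M-k)+1) * ((M+2).choose (k+1)) = (M+2)*((M+1)*(M.choose k)) := by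
  have hc2 : (M+1) - k = (M-k)+1 := by omega
  have e1 := Nat.add_one_mul_choose_eq (M+1) k
  have e2 := Nat.choose_succ_right_eq (M+1) k
  have e3 := Nat.add_one_mul_choose_eq M k
  have step1 : (k+1)*((M-k)+1)*((M+2).choose (k+1))
      = ((M-k)+1) * ((M+2).choose (k+1) * (k+1)) := by ring
  have e1' : (M+2) * ((M+1).choose k) = (M+2).choose (k+1) * (k+1) := by
    simpa [Nat.succ_eq_add_one] using e1
  have step2 : ((M+2).choose (k+1) * (k+1)) = (M+2) * ((M+1).choose k) := e1'.symm
  have step3 : ((M-k)+1) * ((M+2) * ((M+1).choose k))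
      = (M+2) * (((M+1).choose k) * ((M+1) - k)) := by rw [hc2]; ring
  have step4 : ((M+1).choose k) * ((M+1) - k) = (M+1).choose (k+1) * (k+1) := e2.symm
  have e3' : (M+1) * (M.choose k) = (M+1).choose (k+1) * (k+1) := by
    simpa [Nat.succ_eq_add_one] using e3
  have step5 : (M+1).choose (k+1) * (k+1) = (M+1)*(M.choose k) := e3'.symm
  rw [step1, step2, step3, step4, step5]
  all_goals ring

lemma sum_G_mid (e : OU.Eff) (M : ℕ) :
    ∑ k ∈ Finset.range (M+3), ((k * (M+2-k) * ((M+2).choose k) : ℕ) : ℝ) • (Gf e k (M+2-k)).1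
      = (((M+2)*((M+1)*1) : ℕ) : ℝ) • (OU.ses.seq e (OU.ses.compl e)).1 := by
  set z := OU.ses.seq e (OU.ses.compl e) with hz
  have h1 : ∑ k ∈ Finset.range (M+3), ((k * (M+2-k) * ((M+2).choose k) : ℕ) : ℝ) • (Gf e k (M+2-k)).1
      = ∑ k ∈ Finset.range (M+2),
          (((k+1) * (M+2-(k+1)) * ((M+2).choose (k+1)) : ℕ) : ℝ) • (Gf e (k+1) (M+2-(k+1))).1 := by
    rw [Finset.sum_range_succ']
    norm_num
  have h2 : ∑ k ∈ Finset.range (M+2),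
          (((k+1) * (M+2-(k+1)) * ((M+2).choose (k+1)) : ℕ) : ℝ) • (Gf e (k+1) (M+2-(k+1))).1
      = ∑ k ∈ Finset.range (M+1),
          (((k+1) * (M+2-(k+1)) * ((M+2).choose (k+1)) : ℕ) : ℝ) • (Gf e (k+1) (M+2-(k+1))).1 := by
    rw [Finset.sum_range_succ]
    have : M + 2 - (M+1+1) = 0 := by omega
    rw [this]
    norm_num
  have h3 : ∀ k ∈ Finset.range (M+1),
      (((k+1) * (M+2-(k+1)) * ((M+2).choose (k+1)) : ℕ) : ℝ) • (Gf e (k+1) (M+2-(k+1))).1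
      = (((M+2)*((M+1)*1) : ℕ):ℝ) • (((M.choose k : ℕ)):ℝ) • (seqL (OU := OU) z.1 (Gf e k (M-k)).1) := by
    intro k hk
    have hkM := Finset.mem_range.mp hk
    have hidx : M + 2 - (k+1) = (M - k) + 1 := by omega
    rw [hidx, choose_coef M k (by omega)]
    have hG : (Gf e (k+1) ((M-k)+1)).1 = OU.seq z.1 (Gf e k (M-k)).1 := by
      rw [G_succ_both, OU.ses_seq]
    rw [hG, seqL_apply]
    push_cast
    rw [smul_smul]
    ring_nf
  calc ∑ k ∈ Finset.range (M+3), ((k * (M+2-k) * ((M+2).choose k) : ℕ) : ℝ) • (Gf e k (M+2-k)).1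
      = ∑ k ∈ Finset.range (M+1),
          (((k+1) * (M+2-(k+1)) * ((M+2).choose (k+1)) : ℕ) : ℝ) • (Gf e (k+1) (M+2-(k+1))).1 := by
        rw [h1, h2]
    _ = ∑ k ∈ Finset.range (M+1),
          (((M+2)*((M+1)*1) : ℕ):ℝ) • (((M.choose k : ℕ)):ℝ) • (seqL (OU := OU) z.1 (Gf e k (M-k)).1) := by
        exact Finset.sum_congr rfl h3
    _ = (((M+2)*((M+1)*1) : ℕ):ℝ) • (seqL (OU := OU) z.1
          (∑ k ∈ Finset.range (M+1), ((M.choose k : ℕ):ℝ) • (Gf e k (M-k)).1)) := by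
        rw [← Finset.smul_sum]
        congr 1
        rw [map_sum]
        exact Finset.sum_congr rfl (fun k _ => by rw [map_smul])
    _ = (((M+2)*((M+1)*1) : ℕ):ℝ) • z.1 := by
        rw [sum_G e M, seqL_apply, OU.seq_one_right z]

/-- The key spectral bound: `4 e(1-e) ≤ 1`. -/
lemma four_z_le_one (e : OU.Eff) :
    (4:ℝ) • (OU.ses.seq e (OU.ses.compl e)).1 ≤ OU.one := by
  set z := OU.ses.seq e (OU.ses.compl e) with hz
  have key : ∀ M : ℕ, (4:ℝ) • z.1 ≤ OU.one + (1/((M:ℝ)+1)) • OU.one := by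
    intro M
    set N := M + 2 with hN
    have hc : (0:ℝ) < ((M:ℝ)+2)*((M:ℝ)+1) := by positivity
    have hpos : (0:V) ≤ ∑ k ∈ Finset.range (N+1),
        ((((N:ℝ)^2/4) * (N.choose k : ℝ) - ((k * (N-k) * (N.choose k) : ℕ) : ℝ)) • (Gf e k (N-k)).1) := by
      apply OU.sum_nonneg''
      intro k hk
      have hkN : k ≤ N := by
        have := Finset.mem_range.mp hk
        omega
      apply OU.smul_nonneg _ (Gf e k (N-k)).2.1
      have hcast : ((k * (N-k) * (N.choose k) : ℕ) : ℝ)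
          = (k:ℝ) * ((N:ℝ) - (k:ℝ)) * (N.choose k : ℝ) := by
        push_cast [Nat.cast_sub hkN]
        ring
      rw [hcast]
      have h4 : (0:ℝ) ≤ ((N:ℝ) - 2*(k:ℝ))^2 := sq_nonneg _
      have hCnn : (0:ℝ) ≤ (N.choose k : ℝ) := Nat.cast_nonneg _
      nlinarith [hCnn, h4]
    have hsum : ∑ k ∈ Finset.range (N+1),
        ((((N:ℝ)^2/4) * (N.choose k : ℝ) - ((k * (N-k) * (N.choose k) : ℕ) : ℝ)) • (Gf e k (N-k)).1)
        = ((N:ℝ)^2/4) • OU.one - (((N*(N-1) : ℕ)) : ℝ) • z.1 := by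
      have hsplit : ∀ k, (((N:ℝ)^2/4) * (N.choose k : ℝ) - ((k * (N-k) * (N.choose k) : ℕ) : ℝ)) • (Gf e k (N-k)).1
          = ((N:ℝ)^2/4) • ((N.choose k : ℝ) • (Gf e k (N-k)).1)
            - ((k * (N-k) * (N.choose k) : ℕ) : ℝ) • (Gf e k (N-k)).1 := by
        intro k
        rw [sub_smul, smul_smul]
      rw [Finset.sum_congr rfl (fun k _ => hsplit k), Finset.sum_sub_distrib, ← Finset.smul_sum,
        sum_G e N]
      congr 2
      · have h7 : N - 1 = M + 1 := by omega
        have h8 : N * (N - 1) = (M+2)*((M+1)*1) := by rw [h7]; all_goals ring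
        rw [h8]
        exact sum_G_mid e M
    rw [hsum] at hpos
    have hle : (((N*(N-1) : ℕ)) : ℝ) • z.1 ≤ ((N:ℝ)^2/4) • OU.one := by
      apply OU.le_of_sub_nonneg
      exact hpos
    have hNc : (((N*(N-1) : ℕ)) : ℝ) = ((M:ℝ)+2)*((M:ℝ)+1) := by
      have h7 : N - 1 = M + 1 := by omega
      have h8 : N * (N-1) = (M+2)*(M+1) := by rw [h7]; all_goals ring
      rw [h8]
      push_cast
      ring
    rw [hNc] at hle
    have hscale := OU.smul_le_smul' (by positivity : (0:ℝ) ≤ 4/(((M:ℝ)+2)*((M:ℝ)+1))) hle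
    rw [smul_smul, smul_smul] at hscale
    have hs1 : 4/(((M:ℝ)+2)*((M:ℝ)+1)) * (((M:ℝ)+2)*((M:ℝ)+1)) = 4 := by
      field_simp
    have hs2 : 4/(((M:ℝ)+2)*((M:ℝ)+1)) * ((N:ℝ)^2/4) = 1 + 1/((M:ℝ)+1) := by
      have hNr : (N:ℝ) = (M:ℝ)+2 := by push_cast [hN]; ring
      rw [hNr]
      field_simp
      ring
    rw [hs1, hs2, add_smul, one_smul] at hscale
    exact hscale
  have harch : (4:ℝ) • z.1 - OU.one ≤ 0 := by
    apply OU.archimedean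
    intro n
    have := key n
    apply OU.le_of_sub_nonneg
    have h5 := OU.sub_nonneg' this
    have heq : (1/((n:ℝ)+1)) • OU.one - ((4:ℝ) • z.1 - OU.one)
        = OU.one + (1/((n:ℝ)+1)) • OU.one - (4:ℝ) • z.1 := by abel
    rwa [heq]
  have := OU.le_of_sub_nonneg (a := (4:ℝ) • z.1) (b := OU.one) ?_
  · exact this
  · have h6 := OU.sub_nonneg' harch
    simpa using h6

end OrderUnitSES

namespace OrderUnitSES

variable {V : Type*} [AddCommGroup V] [PartialOrder V] [Module ℝ V] {OU : OrderUnitSES V}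

lemma commE_d_e (e : OU.Eff) : CommE (OU.ses.compl e) e :=
  commE_symm (commE_compl (commE_refl e))

lemma seq_dd (e : OU.Eff) : OU.seq (OU.ses.compl e).1 (OU.ses.compl e).1
    = (OU.ses.compl e).1 - (OU.ses.seq e (OU.ses.compl e)).1 := by
  rw [seq_compl_val (OU.ses.compl e) e, OU.ses_seq]
  rw [commE_val (commE_d_e e)]

lemma seq_ee (e : OU.Eff) : OU.seq e.1 e.1
    = e.1 - (OU.ses.seq e (OU.ses.compl e)).1 := by
  have h := seq_compl_val e e
  rw [OU.ses_seq]
  have h2 : OU.seq e.1 (OU.ses.compl e).1 = e.1 - OU.seq e.1 e.1 := h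
  rw [h2]
  abel

lemma commE_of_smul_val {c u v : OU.Eff} {r : ℝ} (hr : 0 ≤ r) (hv : v.1 = r • u.1)
    (h : CommE c u) : CommE c v := by
  apply commE_of_val
  rw [hv, OU.seq_smul, commE_val h, ← OU.seq_homog _ _ hr]

lemma newt_le_double {w c : OU.Eff} (hc : CommE c w)
    (hkey : (1/2:ℝ) • w.1 + (2:ℝ) • (OU.seq c.1 c.1) ≤ (2:ℝ) • c.1) :
    ∀ m, (newt w m).1 ≤ (2:ℝ) • c.1 := by
  intro m
  induction m with
  | zero =>
    rw [newt_zero_val]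
    exact OU.smul_nonneg (by norm_num) c.2.1
  | succ m IH =>
    rw [newt_succ_val]
    set S := newt w m with hS
    have h1 : OU.seq S.1 S.1 ≤ (2:ℝ) • OU.seq S.1 c.1 := by
      have := OU.seq_mono2 S.2.1 IH
      rwa [OU.seq_smul] at this
    have h2 : OU.seq S.1 c.1 = OU.seq c.1 S.1 := (commE_val (commE_newt hc m)).symm
    have h3 : OU.seq c.1 S.1 ≤ (2:ℝ) • OU.seq c.1 c.1 := by
      have := OU.seq_mono2 c.2.1 IH
      rwa [OU.seq_smul] at this
    have h4 : OU.seq S.1 S.1 ≤ (4:ℝ) • OU.seq c.1 c.1 := by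
      rw [h2] at h1
      have h5 := OU.smul_le_smul' (by norm_num : (0:ℝ) ≤ 2) h3
      rw [smul_smul] at h5
      norm_num at h5
      exact h1.trans h5
    have h6 : (1/2:ℝ) • w.1 + (1/2:ℝ) • OU.seq S.1 S.1
        ≤ (1/2:ℝ) • w.1 + (2:ℝ) • OU.seq c.1 c.1 := by
      apply OU.add_le_add'' le_rfl
      have := OU.smul_le_smul' (by norm_num : (0:ℝ) ≤ (1/2:ℝ)) h4
      rwa [smul_smul, (by norm_num : (1/2:ℝ) * 4 = 2)] at this
    exact h6.trans hkey

lemma half_newtT_le {w c : OU.Eff} (hc : CommE c w)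
    (hkey : (1/2:ℝ) • w.1 + (2:ℝ) • (OU.seq c.1 c.1) ≤ (2:ℝ) • c.1) :
    (1/2:ℝ) • (newtT w).1 ≤ c.1 := by
  have hm : ∀ m, (OU.ses.smul (1/2:ℝ) (newt w m)).1 ≤ c.1 := by
    intro m
    rw [smul_half_val]
    have := OU.smul_le_smul' (by norm_num : (0:ℝ) ≤ (1/2:ℝ)) (newt_le_double hc hkey m)
    rwa [smul_smul, (by norm_num : (1/2:ℝ) * 2 = 1), one_smul] at this
  have hf2 : IncE (fun m => OU.ses.smul (1/2:ℝ) (newt w m)) := by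
    intro m
    rw [smul_half_val, smul_half_val]
    exact OU.smul_le_smul' (by norm_num) (newt_mono w m)
  have h := SUP_le hf2 c hm
  rwa [SUP_smul_half (newt_mono w)] at h

lemma compl_compl (x : OU.Eff) : OU.ses.compl (OU.ses.compl x) = x := by
  apply Subtype.ext
  rw [OU.ses_compl, OU.ses_compl]
  abel

/-- The central decomposition lemma: an effect `e` admits `A` with
`A² = 1 - 4e(1-e)` and `-A ≤ 2e - 1 ≤ A`. -/
lemma central_decomp (e : OU.Eff) : ∃ A : OU.Eff,
    (OU.seq A.1 A.1 = OU.one - (4:ℝ) • (OU.ses.seq e (OU.ses.compl e)).1)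
    ∧ (0 ≤ (1/2:ℝ) • A.1 + (e.1 - (1/2:ℝ) • OU.one))
    ∧ (0 ≤ (1/2:ℝ) • A.1 - (e.1 - (1/2:ℝ) • OU.one)) := by
  set d := OU.ses.compl e with hd
  set z := OU.ses.seq e d with hzdef
  have h4z := four_z_le_one (OU := OU) e
  set wE : OU.Eff := ⟨(4:ℝ) • z.1, OU.smul_nonneg (by norm_num) z.2.1, h4z⟩ with hwE
  have hcez : CommE e z := commE_seq (commE_refl e) (commE_compl (commE_refl e))
  have hcdz : CommE d z := commE_seq (commE_d_e e) (commE_refl d)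
  have hcew : CommE e wE := commE_of_smul_val (by norm_num) rfl hcez
  have hcdw : CommE d wE := commE_of_smul_val (by norm_num) rfl hcdz
  have hkeyd : (1/2:ℝ) • wE.1 + (2:ℝ) • (OU.seq d.1 d.1) ≤ (2:ℝ) • d.1 := by
    apply le_of_eq
    have h1 : wE.1 = (4:ℝ) • z.1 := rfl
    rw [h1, seq_dd e]
    module
  have hkeye : (1/2:ℝ) • wE.1 + (2:ℝ) • (OU.seq e.1 e.1) ≤ (2:ℝ) • e.1 := by
    apply le_of_eq
    have h1 : wE.1 = (4:ℝ) • z.1 := rfl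
    rw [h1, seq_ee e]
    module
  set T := newtT wE with hT
  have hTd : (1/2:ℝ) • T.1 ≤ d.1 := half_newtT_le hcdw hkeyd
  have hTe : (1/2:ℝ) • T.1 ≤ e.1 := half_newtT_le hcew hkeye
  refine ⟨OU.ses.compl T, ?_, ?_, ?_⟩
  · have h1 : OU.ses.compl T = sqrtE (OU.ses.compl wE) := by
      rw [sqrtE, compl_compl]
    rw [h1, sqrtE_sq (OU.ses.compl wE), OU.ses_compl]
    all_goals rfl
  · have hAv : (OU.ses.compl T).1 = OU.one - T.1 := OU.ses_compl T
    rw [hAv]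
    have := OU.sub_nonneg' hTe
    have heq : e.1 - (1/2:ℝ) • T.1
        = (1/2:ℝ) • (OU.one - T.1) + (e.1 - (1/2:ℝ) • OU.one) := by module
    rwa [heq] at this
  · have hAv : (OU.ses.compl T).1 = OU.one - T.1 := OU.ses_compl T
    rw [hAv]
    have := OU.sub_nonneg' hTd
    have hdv : d.1 = OU.one - e.1 := OU.ses_compl e
    rw [hdv] at this
    have heq : OU.one - e.1 - (1/2:ℝ) • T.1
        = (1/2:ℝ) • (OU.one - T.1) - (e.1 - (1/2:ℝ) • OU.one) := by module
    rwa [heq] at this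

lemma scale_to_eff (a : V) (ha : 0 ≤ a) : ∃ (r : ℝ) (e : OU.Eff), 0 < r ∧ a = r • e.1 := by
  obtain ⟨n, _, h2⟩ := OU.orderUnit a
  set r : ℝ := (n:ℝ) + 1 with hr
  have hr0 : 0 < r := by positivity
  have har : a ≤ r • OU.one := by
    refine h2.trans ?_
    apply OU.le_of_sub_nonneg
    have heq : r • OU.one - (n:ℝ) • OU.one = OU.one := by
      rw [hr, ← sub_smul]
      norm_num
    rw [heq]
    exact OU.one_nonneg
  have hmem1 : (0:V) ≤ r⁻¹ • a := OU.smul_nonneg (by positivity) ha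
  have hmem2 : r⁻¹ • a ≤ OU.one := by
    have := OU.smul_le_smul' (by positivity : (0:ℝ) ≤ r⁻¹) har
    rwa [smul_smul, inv_mul_cancel₀ (ne_of_gt hr0), one_smul] at this
  refine ⟨r, ⟨r⁻¹ • a, hmem1, hmem2⟩, hr0, ?_⟩
  rw [smul_smul, mul_inv_cancel₀ (ne_of_gt hr0), one_smul]

end OrderUnitSES

open scoped RealInnerProductSpace

/-- If the order unit space `V` of a sequential effect space is a Hilbert space whose
inner product satisfies `⟪a ∘ b, c⟫ = ⟪b, a ∘ c⟫` for all effects `a, b, c`, then the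
inner product of positive elements is nonnegative, and the positive cone is self-dual:
`0 ≤ a` iff `⟪a, b⟫ ≥ 0` for all `b ≥ 0`. -/
theorem hilbertSES_cone_selfDual {V : Type*} [NormedAddCommGroup V]
    [InnerProductSpace ℝ V] [CompleteSpace V] [PartialOrder V]
    (OU : OrderUnitSES V)
    (hsym : ∀ a b c : V, 0 ≤ a → a ≤ OU.one → 0 ≤ b → b ≤ OU.one → 0 ≤ c → c ≤ OU.one →
      ⟪OU.seq a b, c⟫ = ⟪b, OU.seq a c⟫) :
    (∀ a b : V, 0 ≤ a → 0 ≤ b → 0 ≤ ⟪a, b⟫) ∧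
    (∀ a : V, 0 ≤ a ↔ ∀ b : V, 0 ≤ b → 0 ≤ ⟪a, b⟫) := by
  classical
  have one_nn : (0:V) ≤ OU.one := OU.one_nonneg
  -- Part 1 for effects
  have heff : ∀ e f : OU.Eff, 0 ≤ ⟪(e.1 : V), (f.1 : V)⟫ := by
    intro e f
    have h1 : ⟪e.1, f.1⟫ = ⟪OU.seq e.1 OU.one, f.1⟫ := by rw [OU.seq_one_right e]
    have h2 := hsym e.1 OU.one f.1 e.2.1 e.2.2 one_nn le_rfl f.2.1 f.2.2
    set g := OU.ses.seq e f with hg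
    have hgv : OU.seq e.1 f.1 = g.1 := (OU.ses_seq e f).symm
    set r := OrderUnitSES.sqrtE g with hr
    have hrsq : OU.seq r.1 r.1 = g.1 := OrderUnitSES.sqrtE_sq g
    have h3 := hsym r.1 OU.one r.1 r.2.1 r.2.2 one_nn le_rfl r.2.1 r.2.2
    rw [OU.seq_one_right r, hrsq] at h3
    rw [h1, h2, hgv, ← h3]
    exact real_inner_self_nonneg
  have part1 : ∀ a b : V, 0 ≤ a → 0 ≤ b → 0 ≤ ⟪a, b⟫ := by
    intro a b ha hb
    obtain ⟨ra, ea, hra, haa⟩ := OrderUnitSES.scale_to_eff (OU := OU) a ha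
    obtain ⟨rb, eb, hrb, hbb⟩ := OrderUnitSES.scale_to_eff (OU := OU) b hb
    rw [haa, hbb, real_inner_smul_left, real_inner_smul_right]
    exact mul_nonneg hra.le (mul_nonneg hrb.le (heff ea eb))
  refine ⟨part1, ?_⟩
  intro a
  constructor
  · intro ha b hb
    exact part1 a b ha hb
  · intro hb
    obtain ⟨n, hn1, hn2⟩ := OU.orderUnit a
    set r : ℝ := (n:ℝ) + 1 with hrdef
    have hr0 : (0:ℝ) < r := by positivity
    have h2r0 : (0:ℝ) < 2*r := by positivity
    have hnr : (n:ℝ) • OU.one ≤ r • OU.one := by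
      apply OU.le_of_sub_nonneg
      rw [← sub_smul]
      have : r - (n:ℝ) = 1 := by rw [hrdef]; ring
      rw [this, one_smul]
      exact one_nn
    have hup : a ≤ r • OU.one := hn2.trans hnr
    have hlow : -(r • OU.one) ≤ a := by
      refine le_trans ?_ hn1
      apply OU.le_of_sub_nonneg
      have heq : -((n:ℝ) • OU.one) - -(r • OU.one) = r • OU.one - (n:ℝ) • OU.one := by abel
      rw [heq, ← sub_smul]
      have : r - (n:ℝ) = 1 := by rw [hrdef]; ring
      rw [this, one_smul]
      exact one_nn
    have ha1 : (0:V) ≤ a + r • OU.one := by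
      have h := OU.add_le_add (r • OU.one) hlow
      simpa using h
    have ha2 : a + r • OU.one ≤ (2*r) • OU.one := by
      have h := OU.add_le_add'' hup (le_refl (r • OU.one))
      have heq : r • OU.one + r • OU.one = (2*r) • OU.one := by module
      rwa [heq] at h
    have he1 : (0:V) ≤ (2*r)⁻¹ • (a + r • OU.one) :=
      OU.smul_nonneg (by positivity) ha1
    have he2 : (2*r)⁻¹ • (a + r • OU.one) ≤ OU.one := by
      have h := OU.smul_le_smul' (by positivity : (0:ℝ) ≤ (2*r)⁻¹) ha2
      rwa [smul_smul, inv_mul_cancel₀ (ne_of_gt h2r0), one_smul] at h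
    obtain ⟨e, heval⟩ : ∃ e : OU.Eff, e.1 = (2*r)⁻¹ • (a + r • OU.one) :=
      ⟨⟨(2*r)⁻¹ • (a + r • OU.one), he1, he2⟩, rfl⟩
    obtain ⟨A, hA2, hPP, hNN⟩ := OrderUnitSES.central_decomp e
    set x : V := e.1 - (1/2:ℝ) • OU.one with hx
    have hax : a = (2*r) • x := by
      have h1 : (2*r) • e.1 = a + r • OU.one := by
        rw [heval, smul_smul, mul_inv_cancel₀ (ne_of_gt h2r0), one_smul]
      have h2 : (2*r) • ((1/2:ℝ) • OU.one) = r • OU.one := by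
        rw [smul_smul]
        congr 1
        ring
      rw [hx, smul_sub, h1, h2]
      abel
    set P : V := (1/2:ℝ) • A.1 + x with hP
    set N : V := (1/2:ℝ) • A.1 - x with hN
    have hPpos : 0 ≤ P := hPP
    have hNpos : 0 ≤ N := hNN
    have hPN : P - N = (2:ℝ) • x := by
      rw [hP, hN]
      module
    set z := OU.ses.seq e (OU.ses.compl e) with hz
    -- inner product identities
    have hAA := hsym A.1 OU.one A.1 A.2.1 A.2.2 one_nn le_rfl A.2.1 A.2.2
    rw [OU.seq_one_right A, hA2] at hAA
    have hAAval : ⟪A.1, A.1⟫ = ⟪OU.one, OU.one⟫ - 4 * ⟪OU.one, z.1⟫ := by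
      rw [hAA, inner_sub_right, real_inner_smul_right]
    have heeq := hsym e.1 OU.one e.1 e.2.1 e.2.2 one_nn le_rfl e.2.1 e.2.2
    rw [OU.seq_one_right e, OrderUnitSES.seq_ee e] at heeq
    have heeval : ⟪e.1, e.1⟫ = ⟪OU.one, e.1⟫ - ⟪OU.one, z.1⟫ := by
      rw [heeq, inner_sub_right]
    have hcomm1 : ⟪e.1, OU.one⟫ = ⟪OU.one, e.1⟫ := real_inner_comm _ _
    have hxx : ⟪x, x⟫ = ⟪OU.one, OU.one⟫/4 - ⟪OU.one, z.1⟫ := by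
      have hexp : ⟪x, x⟫ = ⟪e.1, e.1⟫ - ⟪e.1, OU.one⟫/2 - ⟪OU.one, e.1⟫/2
          + ⟪OU.one, OU.one⟫/4 := by
        rw [hx]
        simp only [inner_sub_left, inner_sub_right, real_inner_smul_left,
          real_inner_smul_right]
        ring
      rw [hexp, heeval, hcomm1]
      ring
    have huu : ⟪(1/2:ℝ) • A.1, (1/2:ℝ) • A.1⟫ = ⟪OU.one, OU.one⟫/4 - ⟪OU.one, z.1⟫ := by
      rw [real_inner_smul_left, real_inner_smul_right, hAAval]
      ring
    have hcomm2 : ⟪x, (1/2:ℝ) • A.1⟫ = ⟪(1/2:ℝ) • A.1, x⟫ := real_inner_comm _ _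
    have horth : ⟪P, N⟫ = 0 := by
      have hexp : ⟪P, N⟫ = ⟪(1/2:ℝ) • A.1, (1/2:ℝ) • A.1⟫ - ⟪(1/2:ℝ) • A.1, x⟫
          + ⟪x, (1/2:ℝ) • A.1⟫ - ⟪x, x⟫ := by
        rw [hP, hN]
        simp only [inner_add_left, inner_sub_right]
        ring
      rw [hexp, hcomm2, huu, hxx]
      ring
    have hbN := hb N hNpos
    have haN : ⟪a, N⟫ = 2*r*⟪x, N⟫ := by
      rw [hax, real_inner_smul_left]
    have hxN : (2:ℝ)*⟪x, N⟫ = -⟪N, N⟫ := by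
      have h1 : ⟪P - N, N⟫ = ⟪P, N⟫ - ⟪N, N⟫ := inner_sub_left _ _ _
      rw [hPN, real_inner_smul_left, horth] at h1
      linarith
    have hNN0 : ⟪N, N⟫ = 0 := by
      have h1 : 0 ≤ r * (-⟪N, N⟫) := by
        have : (2:ℝ)*r*⟪x,N⟫ = r * ((2:ℝ)*⟪x,N⟫) := by ring
        rw [haN, this, hxN] at hbN
        exact hbN
      have h2 : 0 ≤ -⟪N, N⟫ := by
        by_contra hcon
        push_neg at hcon
        nlinarith [h1, hr0]
      have h3 : (0:ℝ) ≤ ⟪N, N⟫ := real_inner_self_nonneg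
      linarith
    have hNzero : N = 0 := by
      rwa [inner_self_eq_zero] at hNN0
    have hP2x : P = (2:ℝ) • x := by
      have := hPN
      rw [hNzero, sub_zero] at this
      exact this
    have hfinal : a = r • P := by
      rw [hax, hP2x, smul_smul]
      congr 1
      ring
    rw [hfinal]
    exact OU.smul_nonneg hr0.le hPpos
end

section
/- In a Hilbert sequential effect space, every set of pairwise orthogonal nonzero sharp effects is finite. -/
open scoped RealInnerProductSpace

/-- In a Hilbert sequential effect space (a sequential effect space whose associated
order unit space is a Hilbert space with `⟪a ∘ b, c⟫ = ⟪b, a ∘ c⟫` for all effects),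
every set of pairwise orthogonal nonzero sharp effects is finite. -/
theorem hilbertSES_orthogonal_sharp_finite {V : Type*} [NormedAddCommGroup V]
    [InnerProductSpace ℝ V] [CompleteSpace V] [PartialOrder V]
    (OU : OrderUnitSES V)
    (hsym : ∀ a b c : V, 0 ≤ a → a ≤ OU.one → 0 ≤ b → b ≤ OU.one → 0 ≤ c → c ≤ OU.one →
      ⟪OU.seq a b, c⟫ = ⟪b, OU.seq a c⟫)
    (P : Set V)
    (heff : ∀ p ∈ P, 0 ≤ p ∧ p ≤ OU.one)
    (hsharp : ∀ p ∈ P, OU.seq p p = p)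
    (hnonzero : ∀ p ∈ P, p ≠ 0)
    (horth : ∀ p ∈ P, ∀ q ∈ P, p ≠ q → OU.seq p q = 0) :
    P.Finite := by
  classical
  by_contra hfin
  have hP : P.Infinite := hfin
  -- basic order helpers
  have hle1 : ∀ a b : V, 0 ≤ b - a → a ≤ b := by
    intro a b h
    have h2 := OU.add_le_add a h
    rwa [zero_add, sub_add_cancel] at h2
  have hle2 : ∀ a b : V, a ≤ b → 0 ≤ b - a := by
    intro a b h
    have h2 := OU.add_le_add (-a) h
    rwa [add_neg_cancel, ← sub_eq_add_neg] at h2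
  have haddpos : ∀ a b : V, 0 ≤ a → 0 ≤ b → 0 ≤ a + b := by
    intro a b ha hb
    have h := OU.add_le_add b ha
    rw [zero_add] at h
    exact le_trans hb h
  have hone_nn : 0 ≤ OU.one := by
    have h := OU.ses.one.2.1
    rwa [OU.ses_one] at h
  -- seq with zero
  have hsz_r : ∀ a : V, OU.seq a 0 = 0 := by
    intro a
    have h := OU.seq_add a 0 0
    rw [add_zero] at h
    have h2 : OU.seq a 0 + 0 = OU.seq a 0 + OU.seq a 0 := by
      rw [add_zero]; exact h
    exact (add_left_cancel h2).symm
  have hsz_l : ∀ b : V, OU.seq 0 b = 0 := by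
    intro b
    have h := OU.seq_homog (r := 0) 0 b le_rfl
    rwa [zero_smul, zero_smul] at h
  have hseq_sub : ∀ a u w : V, OU.seq a (u - w) = OU.seq a u - OU.seq a w := by
    intro a u w
    rw [sub_eq_add_neg, OU.seq_add, ← neg_one_smul ℝ w, OU.seq_smul, neg_one_smul,
      ← sub_eq_add_neg]
  -- seq p one = p for effects p
  have hone_r : ∀ p : V, 0 ≤ p → p ≤ OU.one → OU.seq p OU.one = p := by
    intro p h0 h1
    have hz1 : OU.ses.seq ⟨p, h0, h1⟩ OU.ses.zero = OU.ses.zero := by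
      apply Subtype.ext
      rw [OU.ses_seq, OU.ses_zero]
      exact hsz_r p
    have hz2 : OU.ses.seq OU.ses.zero ⟨p, h0, h1⟩ = OU.ses.zero := by
      apply Subtype.ext
      rw [OU.ses_seq, OU.ses_zero]
      exact hsz_l p
    have hD01 : OU.ses.D OU.ses.zero OU.ses.one := OU.ses.D_comm (OU.ses.D_zero OU.ses.one)
    have hco : OU.ses.one = OU.ses.compl OU.ses.zero := by
      apply OU.ses.compl_unique hD01
      rw [OU.ses.add_comm' hD01]
      exact OU.ses.add_zero' OU.ses.one
    have hcs := OU.ses.seq_compl (hz1.trans hz2.symm)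
    rw [← hco] at hcs
    have h3 := hcs.trans (OU.ses.one_seq ⟨p, h0, h1⟩)
    have hval := congrArg Subtype.val h3
    rw [OU.ses_seq, OU.ses_one] at hval
    exact hval
  -- decomposition of arbitrary vectors into effects
  have hdec : ∀ x : V, ∃ ρ ν : ℝ, ∃ w : V, 0 ≤ w ∧ w ≤ OU.one ∧ x = ρ • w - ν • OU.one := by
    intro x
    obtain ⟨n, hn1, hn2⟩ := OU.orderUnit x
    set N : ℝ := (n : ℝ) + 1 with hN
    have h2N : (2 * N) ≠ 0 := by positivity
    have hx1 : 0 ≤ x + N • OU.one := by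
      have hA : 0 ≤ x + (n : ℝ) • OU.one := by
        have h := OU.add_le_add ((n : ℝ) • OU.one) hn1
        rwa [neg_add_cancel] at h
      have hrw : x + N • OU.one = (x + (n : ℝ) • OU.one) + OU.one := by
        rw [hN, add_smul, one_smul]; abel
      rw [hrw]
      exact haddpos _ _ hA hone_nn
    have hx2 : 0 ≤ N • OU.one - x := by
      have hA : 0 ≤ (n : ℝ) • OU.one - x := hle2 _ _ hn2
      have hrw : N • OU.one - x = ((n : ℝ) • OU.one - x) + OU.one := by
        rw [hN, add_smul, one_smul]; abel
      rw [hrw]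
      exact haddpos _ _ hA hone_nn
    have key : (2 * N)⁻¹ • (x + N • OU.one) + (2 * N)⁻¹ • (N • OU.one - x) = OU.one := by
      rw [← smul_add]
      have hrw : x + N • OU.one + (N • OU.one - x) = (2 * N) • OU.one := by module
      rw [hrw, smul_smul, inv_mul_cancel₀ h2N, one_smul]
    refine ⟨2 * N, N, (2 * N)⁻¹ • (x + N • OU.one),
      OU.smul_nonneg (by positivity) hx1, ?_, ?_⟩
    · apply hle1
      have hrw : (2 * N)⁻¹ • (N • OU.one - x) = OU.one - (2 * N)⁻¹ • (x + N • OU.one) :=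
        eq_sub_of_add_eq' key
      rw [← hrw]
      exact OU.smul_nonneg (by positivity) hx2
    · rw [smul_smul, mul_inv_cancel₀ h2N, one_smul]
      abel
  -- symmetry of seq a on all of V
  have hsymV : ∀ a : V, 0 ≤ a → a ≤ OU.one → ∀ x y : V,
      ⟪OU.seq a x, y⟫ = ⟪x, OU.seq a y⟫ := by
    intro a ha0 ha1 x y
    obtain ⟨ρ, ν, w, hw0, hw1, hx⟩ := hdec x
    obtain ⟨σ, μ, z, hz0, hz1, hy⟩ := hdec y
    have h1 := hsym a w z ha0 ha1 hw0 hw1 hz0 hz1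
    have h2 := hsym a w OU.one ha0 ha1 hw0 hw1 hone_nn le_rfl
    have h3 := hsym a OU.one z ha0 ha1 hone_nn le_rfl hz0 hz1
    have h4 := hsym a OU.one OU.one ha0 ha1 hone_nn le_rfl hone_nn le_rfl
    rw [hx, hy]
    simp only [hseq_sub, OU.seq_smul, inner_sub_left, inner_sub_right,
      real_inner_smul_left, real_inner_smul_right]
    rw [h1, h2, h3, h4]
  -- inner products of members of P
  have hinner_one : ∀ p ∈ P, ⟪p, OU.one⟫ = ‖p‖ ^ 2 := by
    intro p hp
    obtain ⟨h0, h1⟩ := heff p hp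
    calc ⟪p, OU.one⟫ = ⟪OU.seq p p, OU.one⟫ := by rw [hsharp p hp]
      _ = ⟪p, OU.seq p OU.one⟫ := hsym p p OU.one h0 h1 h0 h1 hone_nn le_rfl
      _ = ⟪p, p⟫ := by rw [hone_r p h0 h1]
      _ = ‖p‖ ^ 2 := real_inner_self_eq_norm_sq p
  have hinner_orth : ∀ p ∈ P, ∀ q ∈ P, p ≠ q → ⟪p, q⟫ = 0 := by
    intro p hp q hq hne
    obtain ⟨h0, h1⟩ := heff p hp
    obtain ⟨k0, k1⟩ := heff q hq
    calc ⟪p, q⟫ = ⟪OU.seq p p, q⟫ := by rw [hsharp p hp]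
      _ = ⟪p, OU.seq p q⟫ := hsym p p q h0 h1 h0 h1 k0 k1
      _ = 0 := by rw [horth p hp q hq hne, inner_zero_right]
  -- only finitely many elements of P with norm ≥ ε
  have hbig : ∀ ε : ℝ, 0 < ε → {p | p ∈ P ∧ ε ≤ ‖p‖}.Finite := by
    intro ε hε
    by_contra hinf
    have hinf' : {p | p ∈ P ∧ ε ≤ ‖p‖}.Infinite := hinf
    obtain ⟨t, hts, htc⟩ := hinf'.exists_subset_card_eq (⌈‖OU.one‖ ^ 2 / ε ^ 2⌉₊ + 1)
    have hmem : ∀ p ∈ t, p ∈ P ∧ ε ≤ ‖p‖ := fun p hp => hts hp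
    have h1 : ⟪∑ p ∈ t, p, OU.one⟫ = ∑ p ∈ t, ‖p‖ ^ 2 := by
      rw [sum_inner]
      exact Finset.sum_congr rfl fun p hp => hinner_one p (hmem p hp).1
    have h2 : ⟪∑ p ∈ t, p, ∑ p ∈ t, p⟫ = ∑ p ∈ t, ‖p‖ ^ 2 := by
      rw [sum_inner]
      refine Finset.sum_congr rfl fun p hp => ?_
      rw [inner_sum]
      rw [Finset.sum_eq_single p
        (fun q hq hqp => hinner_orth p (hmem p hp).1 q (hmem q hq).1 (Ne.symm hqp))
        (fun h => absurd hp h)]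
      exact real_inner_self_eq_norm_sq p
    set X : ℝ := ∑ p ∈ t, ‖p‖ ^ 2 with hX
    have hX1 : ((⌈‖OU.one‖ ^ 2 / ε ^ 2⌉₊ + 1 : ℕ) : ℝ) * ε ^ 2 ≤ X := by
      rw [hX]
      calc ((⌈‖OU.one‖ ^ 2 / ε ^ 2⌉₊ + 1 : ℕ) : ℝ) * ε ^ 2 = ∑ _p ∈ t, ε ^ 2 := by
            rw [Finset.sum_const, htc, nsmul_eq_mul]
        _ ≤ ∑ p ∈ t, ‖p‖ ^ 2 := by
            refine Finset.sum_le_sum fun p hp => ?_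
            have hpe := (hmem p hp).2
            nlinarith [hε.le]
    have hX0 : (0 : ℝ) < X := lt_of_lt_of_le (by positivity) hX1
    have hCS : X ≤ ‖∑ p ∈ t, p‖ * ‖OU.one‖ := h1 ▸ real_inner_le_norm (∑ p ∈ t, p) OU.one
    have hss : ‖∑ p ∈ t, p‖ ^ 2 = X := by
      rw [← h2]
      exact (real_inner_self_eq_norm_sq _).symm
    have hsM : ‖∑ p ∈ t, p‖ ≤ ‖OU.one‖ := by nlinarith [norm_nonneg (∑ p ∈ t, p)]
    have hXM : X ≤ ‖OU.one‖ ^ 2 := by nlinarith [norm_nonneg (∑ p ∈ t, p), norm_nonneg OU.one]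
    have hceil := Nat.le_ceil (‖OU.one‖ ^ 2 / ε ^ 2)
    have hlt : ‖OU.one‖ ^ 2 / ε ^ 2 < ((⌈‖OU.one‖ ^ 2 / ε ^ 2⌉₊ + 1 : ℕ) : ℝ) := by
      push_cast
      linarith
    have hM2 : ‖OU.one‖ ^ 2 < ((⌈‖OU.one‖ ^ 2 / ε ^ 2⌉₊ + 1 : ℕ) : ℝ) * ε ^ 2 := by
      rw [div_lt_iff₀ (by positivity : (0:ℝ) < ε ^ 2)] at hlt
      linarith
    linarith
  -- pick elements of P avoiding a finite set, with small norm
  have hpick : ∀ (k : ℕ) (F : Finset V),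
      ∃ p, p ∈ P ∧ p ∉ F ∧ ‖p‖ < (1 / 2 : ℝ) ^ k / ((k : ℝ) + 1) := by
    intro k F
    have hε0 : (0 : ℝ) < (1 / 2 : ℝ) ^ k / ((k : ℝ) + 1) := by positivity
    have hfin : ({p | p ∈ P ∧ (1 / 2 : ℝ) ^ k / ((k : ℝ) + 1) ≤ ‖p‖} ∪ ↑F).Finite :=
      (hbig _ hε0).union F.finite_toSet
    obtain ⟨p, hp1, hp2⟩ := (hP.diff hfin).nonempty
    refine ⟨p, hp1, fun h => hp2 (Or.inr (Finset.mem_coe.mpr h)), ?_⟩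
    by_contra h
    exact hp2 (Or.inl ⟨hp1, not_lt.mp h⟩)
  choose f hfP hfF hfn using hpick
  let Q : ℕ → Finset V := fun k => Nat.rec (∅ : Finset V) (fun k Qk => insert (f k Qk) Qk) k
  let q : ℕ → V := fun k => f k (Q k)
  have hQs : ∀ k, Q (k + 1) = insert (q k) (Q k) := fun k => rfl
  have hQmono : ∀ k l, k ≤ l → Q k ⊆ Q l := by
    intro k l
    induction l with
    | zero =>
      intro h
      rw [Nat.le_zero.mp h]
    | succ l ih =>
      intro h
      rcases Nat.le_succ_iff.mp h with h' | h'
      · refine (ih h').trans ?_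
        rw [hQs]
        exact Finset.subset_insert _ _
      · rw [h']
  have hqP : ∀ k, q k ∈ P := fun k => hfP k (Q k)
  have hq_mem : ∀ k, q k ∈ Q (k + 1) := fun k => by
    rw [hQs]
    exact Finset.mem_insert_self _ _
  have hq_inj : ∀ k l, k < l → q k ≠ q l := by
    intro k l hkl heq
    have h1 : q k ∈ Q l := hQmono (k + 1) l hkl (hq_mem k)
    have h2 : q l ∉ Q l := hfF l (Q l)
    rw [← heq] at h2
    exact h2 h1
  have hqne : ∀ k l, k ≠ l → q k ≠ q l := by
    intro k l h
    rcases lt_or_gt_of_ne h with h' | h'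
    · exact hq_inj k l h'
    · exact (hq_inj l k h').symm
  have hqnorm : ∀ k, ‖q k‖ < (1 / 2 : ℝ) ^ k / ((k : ℝ) + 1) := fun k => hfn k (Q k)
  -- the series
  have hsum : Summable (fun k : ℕ => ((k : ℝ) + 1) • q k) := by
    apply Summable.of_norm
    refine Summable.of_nonneg_of_le (fun k => norm_nonneg _) (fun k => ?_)
      (summable_geometric_of_lt_one (by norm_num) (by norm_num : (1 / 2 : ℝ) < 1))
    rw [norm_smul, Real.norm_eq_abs, abs_of_pos (by positivity : (0:ℝ) < (k : ℝ) + 1)]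
    calc ((k : ℝ) + 1) * ‖q k‖ ≤ ((k : ℝ) + 1) * ((1 / 2 : ℝ) ^ k / ((k : ℝ) + 1)) :=
          mul_le_mul_of_nonneg_left (hqnorm k).le (by positivity)
      _ = (1 / 2 : ℝ) ^ k := by field_simp
  obtain ⟨v, hv⟩ := hsum
  obtain ⟨n, -, hn2⟩ := OU.orderUnit v
  obtain ⟨hqn0, hqn1⟩ := heff (q n) (hqP n)
  have key : OU.seq (q n) v = ((n : ℝ) + 1) • q n := by
    apply ext_inner_right ℝ
    intro y
    rw [hsymV (q n) hqn0 hqn1 v y]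
    have h1 : HasSum (fun k : ℕ => ⟪OU.seq (q n) y, ((k : ℝ) + 1) • q k⟫)
        ⟪OU.seq (q n) y, v⟫ := (innerSL ℝ (OU.seq (q n) y)).hasSum hv
    have h2 : ⟪v, OU.seq (q n) y⟫ = ∑' k : ℕ, ⟪OU.seq (q n) y, ((k : ℝ) + 1) • q k⟫ := by
      rw [real_inner_comm]
      exact h1.tsum_eq.symm
    have h3 : ∀ k : ℕ, ⟪OU.seq (q n) y, ((k : ℝ) + 1) • q k⟫
        = ((k : ℝ) + 1) * ⟪OU.seq (q n) (q k), y⟫ := by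
      intro k
      rw [real_inner_smul_right]
      congr 1
      rw [real_inner_comm]
      exact (hsymV (q n) hqn0 hqn1 (q k) y).symm
    have h4 : ∀ k : ℕ, k ≠ n → ⟪OU.seq (q n) y, ((k : ℝ) + 1) • q k⟫ = 0 := by
      intro k hk
      rw [h3 k, horth (q n) (hqP n) (q k) (hqP k) (hqne n k (Ne.symm hk))]
      simp
    rw [h2, tsum_eq_single n h4, h3 n, hsharp (q n) (hqP n), real_inner_smul_left]
  have hz0 : 0 ≤ (n : ℝ) • OU.one - v := hle2 _ _ hn2
  have hpos := OU.seq_pos hqn0 hz0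
  rw [hseq_sub, OU.seq_smul, key, hone_r (q n) hqn0 hqn1] at hpos
  have hneg : (n : ℝ) • q n - ((n : ℝ) + 1) • q n = -(q n) := by module
  rw [hneg] at hpos
  have hle0 : q n ≤ 0 := by
    have h := OU.add_le_add (q n) hpos
    rwa [zero_add, neg_add_cancel] at h
  exact hnonzero (q n) (hqP n) (le_antisymm hle0 hqn0)
end

section
/- Let E be a sequential effect space with sequential product ∘ whose multiplication maps L_a(b) = a ∘ b satisfy the quadratic identity L_{(a∘b)²} = L_a L_{b²} L_a for all effects a, b. Then ∘ preserves invertibility: if a and b are positive invertible elements, then a ∘ b is invertible with (a ∘ b)⁻¹ = a⁻¹ ∘ b⁻¹. -/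
namespace AuxInvPres

variable {V : Type*} [AddCommGroup V] [PartialOrder V] [Module ℝ V] (OU : OrderUnitSES V)

set_option linter.unusedSectionVars false

include OU

lemma sub_nonneg' {a b : V} (h : a ≤ b) : 0 ≤ b - a := by
  have h2 := OU.add_le_add (-a) h
  simpa [sub_eq_add_neg] using h2

lemma le_of_sub_nonneg {a b : V} (h : 0 ≤ b - a) : a ≤ b := by
  have h2 := OU.add_le_add a h
  simpa using h2

lemma smul_le {r : ℝ} (hr : 0 ≤ r) {a b : V} (h : a ≤ b) : r • a ≤ r • b := by
  apply le_of_sub_nonneg OU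
  rw [← smul_sub]
  exact OU.smul_nonneg hr (sub_nonneg' OU h)

lemma smul_cancel {r : ℝ} (hr : r ≠ 0) {u w : V} (h : r • u = r • w) : u = w := by
  have h2 := congrArg (fun z => r⁻¹ • z) h
  simpa [smul_smul, inv_mul_cancel₀ hr] using h2

lemma one_nonneg : 0 ≤ OU.one := by
  have h := OU.ses.one.2.1
  rwa [OU.ses_one] at h

lemma seq_zero (a : V) : OU.seq a 0 = 0 := by
  calc OU.seq a 0 = OU.seq a ((0:ℝ) • (0:V)) := by rw [zero_smul]
  _ = (0:ℝ) • OU.seq a 0 := OU.seq_smul 0 a 0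
  _ = 0 := zero_smul _ _

lemma seq_sub (a x y : V) : OU.seq a (x - y) = OU.seq a x - OU.seq a y := by
  rw [sub_eq_add_neg, OU.seq_add, ← neg_one_smul ℝ y, OU.seq_smul, neg_one_smul,
    ← sub_eq_add_neg]

lemma scale {v : V} (hv : 0 ≤ v) : ∃ r : ℝ, 0 < r ∧ 0 ≤ r • v ∧ r • v ≤ OU.one := by
  obtain ⟨n, -, h2⟩ := OU.orderUnit v
  refine ⟨((n:ℝ)+1)⁻¹, by positivity, OU.smul_nonneg (by positivity) hv, ?_⟩
  have h3 : ((n:ℝ)+1)⁻¹ • v ≤ ((n:ℝ)+1)⁻¹ • ((n:ℝ) • OU.one) :=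
    smul_le OU (by positivity) h2
  refine h3.trans (le_of_sub_nonneg OU ?_)
  have he : OU.one - ((n:ℝ)+1)⁻¹ • ((n:ℝ) • OU.one) = (((n:ℝ)+1)⁻¹) • OU.one := by
    rw [smul_smul,
      show OU.one - (((n:ℝ)+1)⁻¹ * n) • OU.one = (1 - ((n:ℝ)+1)⁻¹ * n) • OU.one by
        rw [sub_smul, one_smul]]
    congr 1
    have hn : ((n:ℝ)+1) ≠ 0 := by positivity
    field_simp
    ring
  rw [he]
  exact OU.smul_nonneg (by positivity) (one_nonneg OU)

lemma seq_one_of_effect {v : V} (hv : 0 ≤ v) (hv1 : v ≤ OU.one) :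
    OU.seq v OU.one = v := by
  set e : {x : V // 0 ≤ x ∧ x ≤ OU.one} := ⟨v, hv, hv1⟩ with he
  have hz : OU.ses.seq e OU.ses.zero = OU.ses.zero := by
    apply Subtype.ext
    rw [OU.ses_seq, OU.ses_zero, seq_zero]
  have hz2 := OU.ses.seq_orth hz
  have hD : OU.ses.D OU.ses.zero OU.ses.one :=
    OU.ses.D_comm (OU.ses.D_zero OU.ses.one)
  have hcompl : OU.ses.one = OU.ses.compl OU.ses.zero := by
    apply OU.ses.compl_unique hD
    rw [OU.ses.add_comm' hD]
    exact OU.ses.add_zero' OU.ses.one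
  have hc := OU.ses.seq_compl (hz.trans hz2.symm)
  rw [← hcompl, OU.ses.one_seq] at hc
  have hval := congrArg Subtype.val hc
  rwa [OU.ses_seq, OU.ses_one] at hval

lemma seq_one {v : V} (hv : 0 ≤ v) : OU.seq v OU.one = v := by
  obtain ⟨r, hr, hrv, hrv1⟩ := scale OU hv
  have h5 : v = r⁻¹ • (r • v) := by
    rw [smul_smul, inv_mul_cancel₀ hr.ne', one_smul]
  calc OU.seq v OU.one = OU.seq (r⁻¹ • (r • v)) OU.one := by rw [← h5]
  _ = r⁻¹ • OU.seq (r • v) OU.one := OU.seq_homog _ _ (by positivity)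
  _ = r⁻¹ • (r • v) := by rw [seq_one_of_effect OU hrv hrv1]
  _ = v := h5.symm

lemma assoc {x y : V} (hx : 0 ≤ x) (hy : 0 ≤ y)
    (hcomm : OU.seq x y = OU.seq y x) (c : V) :
    OU.seq x (OU.seq y c) = OU.seq (OU.seq x y) c := by
  have hpos : ∀ c : V, 0 ≤ c → OU.seq x (OU.seq y c) = OU.seq (OU.seq x y) c := by
    intro c hc
    obtain ⟨r, hr, hrx, hrx1⟩ := scale OU hx
    obtain ⟨s, hs, hsy, hsy1⟩ := scale OU hy
    obtain ⟨t, ht, htc, htc1⟩ := scale OU hc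
    set ex : {z : V // 0 ≤ z ∧ z ≤ OU.one} := ⟨r • x, hrx, hrx1⟩
    set ey : {z : V // 0 ≤ z ∧ z ≤ OU.one} := ⟨s • y, hsy, hsy1⟩
    set ec : {z : V // 0 ≤ z ∧ z ≤ OU.one} := ⟨t • c, htc, htc1⟩
    have hcomm' : OU.ses.seq ex ey = OU.ses.seq ey ex := by
      apply Subtype.ext
      rw [OU.ses_seq, OU.ses_seq]
      show OU.seq (r • x) (s • y) = OU.seq (s • y) (r • x)
      rw [OU.seq_homog _ _ hr.le, OU.seq_smul, OU.seq_homog _ _ hs.le, OU.seq_smul,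
        hcomm, smul_comm]
    have hmain := congrArg Subtype.val (OU.ses.seq_assoc hcomm' ec)
    rw [OU.ses_seq, OU.ses_seq, OU.ses_seq, OU.ses_seq] at hmain
    have hyc : OU.seq (s • y) (t • c) = (s * t) • OU.seq y c := by
      rw [OU.seq_homog _ _ hs.le, OU.seq_smul, smul_smul]
    have hxy : OU.seq (r • x) (s • y) = (r * s) • OU.seq x y := by
      rw [OU.seq_homog _ _ hr.le, OU.seq_smul, smul_smul]
    have e1 : OU.seq (r • x) (OU.seq (s • y) (t • c))
        = ((r * s) * t) • OU.seq x (OU.seq y c) := by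
      rw [hyc, OU.seq_smul, OU.seq_homog _ _ hr.le]
      simp only [smul_smul]
      congr 1; ring
    have e2 : OU.seq (OU.seq (r • x) (s • y)) (t • c)
        = ((r * s) * t) • OU.seq (OU.seq x y) c := by
      rw [hxy, OU.seq_homog _ _ (mul_nonneg hr.le hs.le), OU.seq_smul, smul_smul]
    rw [e1, e2] at hmain
    exact smul_cancel OU (ne_of_gt (by positivity)) hmain
  obtain ⟨n, hn1, -⟩ := OU.orderUnit c
  have hone : 0 ≤ (n:ℝ) • OU.one := OU.smul_nonneg (Nat.cast_nonneg n) (one_nonneg OU)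
  have hd : 0 ≤ c + (n:ℝ) • OU.one := by
    have h2 := OU.add_le_add ((n:ℝ) • OU.one) hn1
    simpa using h2
  have hc : c = (c + (n:ℝ) • OU.one) - (n:ℝ) • OU.one := by abel
  rw [hc, seq_sub, seq_sub, hpos _ hd, hpos _ hone, ← seq_sub]

lemma hquad' (hquad : ∀ a b : V, 0 ≤ a → a ≤ OU.one → 0 ≤ b → b ≤ OU.one → ∀ c : V,
      OU.seq (OU.seq (OU.seq a b) (OU.seq a b)) c =
        OU.seq a (OU.seq (OU.seq b b) (OU.seq a c)))
    {a b : V} (ha : 0 ≤ a) (hb : 0 ≤ b) (c : V) :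
    OU.seq (OU.seq (OU.seq a b) (OU.seq a b)) c =
      OU.seq a (OU.seq (OU.seq b b) (OU.seq a c)) := by
  obtain ⟨r, hr, hra, hra1⟩ := scale OU ha
  obtain ⟨s, hs, hsb, hsb1⟩ := scale OU hb
  have h := hquad (r • a) (s • b) hra hra1 hsb hsb1 c
  have hP : OU.seq (r • a) (s • b) = (r * s) • OU.seq a b := by
    rw [OU.seq_homog _ _ hr.le, OU.seq_smul, smul_smul]
  have hrs : (0:ℝ) ≤ r * s := mul_nonneg hr.le hs.le
  have e1 : OU.seq (OU.seq (OU.seq (r • a) (s • b)) (OU.seq (r • a) (s • b))) c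
      = ((r * s) * (r * s)) • OU.seq (OU.seq (OU.seq a b) (OU.seq a b)) c := by
    rw [hP, OU.seq_homog _ _ hrs, OU.seq_smul, smul_smul,
      OU.seq_homog _ _ (mul_nonneg hrs hrs)]
  have hbb : OU.seq (s • b) (s • b) = (s * s) • OU.seq b b := by
    rw [OU.seq_homog _ _ hs.le, OU.seq_smul, smul_smul]
  have hac : OU.seq (r • a) c = r • OU.seq a c := OU.seq_homog _ _ hr.le
  have e2 : OU.seq (r • a) (OU.seq (OU.seq (s • b) (s • b)) (OU.seq (r • a) c))
      = ((r * s) * (r * s)) • OU.seq a (OU.seq (OU.seq b b) (OU.seq a c)) := by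
    rw [hbb, hac, OU.seq_smul, OU.seq_homog _ _ (mul_nonneg hs.le hs.le), OU.seq_smul,
      OU.seq_smul, OU.seq_homog _ _ hr.le]
    simp only [smul_smul]
    congr 1; ring
  rw [e1, e2] at h
  exact smul_cancel OU (ne_of_gt (by positivity)) h

lemma key (hquad : ∀ a b : V, 0 ≤ a → a ≤ OU.one → 0 ≤ b → b ≤ OU.one → ∀ c : V,
      OU.seq (OU.seq (OU.seq a b) (OU.seq a b)) c =
        OU.seq a (OU.seq (OU.seq b b) (OU.seq a c)))
    (a b ai bi : V) (ha : 0 ≤ a) (hb : 0 ≤ b) (hai : 0 ≤ ai) (hbi : 0 ≤ bi)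
    (ha1 : OU.seq a ai = OU.one) (ha2 : OU.seq ai a = OU.one)
    (hb1 : OU.seq b bi = OU.one) (hb2 : OU.seq bi b = OU.one) :
    OU.seq (OU.seq a b) (OU.seq ai bi) = OU.one := by
  set p := OU.seq a b with hp_def
  set q := OU.seq ai bi with hq_def
  have hp : 0 ≤ p := OU.seq_pos ha hb
  have cancel_a : ∀ c : V, OU.seq a (OU.seq ai c) = c := by
    intro c
    rw [assoc OU ha hai (ha1.trans ha2.symm) c, ha1, OU.one_seq]
  have cancel_ai : ∀ c : V, OU.seq ai (OU.seq a c) = c := by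
    intro c
    rw [assoc OU hai ha (ha2.trans ha1.symm) c, ha2, OU.one_seq]
  have cancel_b : ∀ c : V, OU.seq b (OU.seq bi c) = c := by
    intro c
    rw [assoc OU hb hbi (hb1.trans hb2.symm) c, hb1, OU.one_seq]
  have cancel_bi : ∀ c : V, OU.seq bi (OU.seq b c) = c := by
    intro c
    rw [assoc OU hbi hb (hb2.trans hb1.symm) c, hb2, OU.one_seq]
  have hpp : ∀ c : V, OU.seq (OU.seq p p) c = OU.seq a (OU.seq (OU.seq b b) (OU.seq a c)) :=
    hquad' OU hquad ha hb
  have passoc : ∀ c : V, OU.seq p (OU.seq p c) = OU.seq (OU.seq p p) c :=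
    assoc OU hp hp rfl
  have bassoc : ∀ c : V, OU.seq b (OU.seq b c) = OU.seq (OU.seq b b) c :=
    assoc OU hb hb rfl
  -- injectivity of L_p
  have inj : ∀ u w : V, OU.seq p u = OU.seq p w → u = w := by
    intro u w h
    have h2 : OU.seq (OU.seq p p) u = OU.seq (OU.seq p p) w := by
      rw [← passoc, ← passoc, h]
    rw [hpp, hpp] at h2
    have h3 := congrArg (OU.seq ai) h2
    rw [cancel_ai, cancel_ai, ← bassoc, ← bassoc] at h3
    have h4 := congrArg (OU.seq bi) h3
    rw [cancel_bi, cancel_bi] at h4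
    have h5 := congrArg (OU.seq bi) h4
    rw [cancel_bi, cancel_bi] at h5
    have h6 := congrArg (OU.seq ai) h5
    rwa [cancel_ai, cancel_ai] at h6
  apply inj
  rw [seq_one OU hp, passoc, hpp]
  have haq : OU.seq a q = bi := cancel_a bi
  rw [haq, ← bassoc, hb1, seq_one OU hb]

end AuxInvPres

/-- If the sequential product of a sequential effect space is quadratic, i.e. its
multiplication maps satisfy `L_{(a∘b)²} = L_a L_{b²} L_a` for all effects `a, b`, then
it preserves invertibility: for positive invertible `a` and `b` the product `a ∘ b`
is invertible with inverse `a⁻¹ ∘ b⁻¹`. -/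
theorem quadratic_implies_invertibility_preserving {V : Type*} [AddCommGroup V]
    [PartialOrder V] [Module ℝ V] (OU : OrderUnitSES V)
    (hquad : ∀ a b : V, 0 ≤ a → a ≤ OU.one → 0 ≤ b → b ≤ OU.one → ∀ c : V,
      OU.seq (OU.seq (OU.seq a b) (OU.seq a b)) c =
        OU.seq a (OU.seq (OU.seq b b) (OU.seq a c)))
    (a b ai bi : V) (ha : 0 ≤ a) (hb : 0 ≤ b) (hai : 0 ≤ ai) (hbi : 0 ≤ bi)
    (ha1 : OU.seq a ai = OU.one) (ha2 : OU.seq ai a = OU.one)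
    (hb1 : OU.seq b bi = OU.one) (hb2 : OU.seq bi b = OU.one) :
    0 ≤ OU.seq ai bi ∧
    OU.seq (OU.seq a b) (OU.seq ai bi) = OU.one ∧
    OU.seq (OU.seq ai bi) (OU.seq a b) = OU.one := by
  exact ⟨OU.seq_pos hai hbi,
    AuxInvPres.key OU hquad a b ai bi ha hb hai hbi ha1 ha2 hb1 hb2,
    AuxInvPres.key OU hquad ai bi a b hai hbi ha hb ha2 ha1 hb2 hb1⟩
end
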